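/- arXiv:1807.02066 — 5 statements merged into one kernel-verified Lean document; each statement's English description precedes it below -/
import Mathlib

section
/- Let $1 \leq p < \infty$, $s \in \mathbb{R}$, and let $g : \mathbb{R} \to L^2(\mathbb{R}^n)$ have finite $p$-variation seminorm $|g|_{V^p}$. Then for any finite increasing sequence $(t_j)_{j=1}^N$, with $m_j = \min\{t_{j+1} - t_j, 1\}$ (and $m_N = 1$), one has $\sum_{j=1}^{N} m_j^p \|g(t_j) - g(t_j - s)\|_{L^2}^p \leq 2(1 + |s|)\, |g|_{V^p}^p$. -/
open MeasureTheory ENNReal Filter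

noncomputable section

/-- The space `L²(ℝⁿ; ℂ)`. -/
abbrev Hsp (n : ℕ) : Type :=
  MeasureTheory.Lp ℂ 2 (volume : Measure (EuclideanSpace ℝ (Fin n)))

namespace DP

variable {n : ℕ}

/-- The homogeneous `p`-variation seminorm of `v : ℝ → L²(ℝⁿ)`, as a supremum over all
finite increasing sequences (partitions). -/
def pVar (p : ℝ) (v : ℝ → Hsp n) : ℝ≥0∞ :=
  ⨆ (N : ℕ) (t : Fin (N + 1) → ℝ) (_ : StrictMono t),
    (∑ j : Fin N, (‖v (t j.succ) - v (t j.castSucc)‖₊ : ℝ≥0∞) ^ p) ^ (1 / p)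

/-- The `L^∞_t L^2_x` norm of `v : ℝ → L²(ℝⁿ)`. -/
def supNorm (v : ℝ → Hsp n) : ℝ≥0∞ := ⨆ t : ℝ, (‖v t‖₊ : ℝ≥0∞)

/-- The `V^p` norm `‖v‖_{V^p} = ‖v‖_{L^∞_t L^2_x} + |v|_{V^p}`. -/
def VpNorm (p : ℝ) (v : ℝ → Hsp n) : ℝ≥0∞ := supNorm v + pVar p v

/-- The step function with partition points `t 0 < t 1 < ... < t N`, taking the value
`f j` on `[t j, t (j+1))` and `f N` on `[t N, ∞)` (and `0` on `(-∞, t 0)`). -/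
def stepFun (N : ℕ) (t : Fin (N + 1) → ℝ) (f : Fin (N + 1) → Hsp n) : ℝ → Hsp n := fun s =>
  (∑ j : Fin N,
      Set.indicator (Set.Ico (t j.castSucc) (t j.succ)) (fun _ => f j.castSucc) s)
    + Set.indicator (Set.Ici (t (Fin.last N))) (fun _ => f (Fin.last N)) s

/-- A `U^p` atom: a step function whose values are `ℓ^p`-normalised in `L²`. -/
def IsUpAtom (p : ℝ) (u : ℝ → Hsp n) : Prop :=
  ∃ (N : ℕ) (t : Fin (N + 1) → ℝ) (f : Fin (N + 1) → Hsp n),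
    StrictMono t ∧ u = stepFun N t f ∧ (∑ j, ‖f j‖ ^ p) ^ (1 / p) = 1

/-- The atomic `U^p` norm: the infimum of `∑ |c j|` over all representations
`u = ∑ c j • (a j)` as an absolutely convergent sum of `U^p` atoms. -/
def UpNorm (p : ℝ) (u : ℝ → Hsp n) : ℝ≥0∞ :=
  ⨅ (c : ℕ → ℝ) (a : ℕ → ℝ → Hsp n) (_ : ∀ j, IsUpAtom p (a j))
    (_ : Summable fun j => |c j|)
    (_ : ∀ s : ℝ, HasSum (fun j => c j • a j s) (u s)),
    ENNReal.ofReal (∑' j, |c j|)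

end DP

lemma partition_le (p : ℝ) (hp : 1 ≤ p) {n : ℕ} (g : ℝ → Hsp n) (N : ℕ)
    (t : Fin (N + 1) → ℝ) (ht : StrictMono t) :
    ∑ j : Fin N, (‖g (t j.succ) - g (t j.castSucc)‖₊ : ℝ≥0∞) ^ p ≤ DP.pVar p g ^ p := by
  have hp0 : p ≠ 0 := by positivity
  have h1 : (∑ j : Fin N, (‖g (t j.succ) - g (t j.castSucc)‖₊ : ℝ≥0∞) ^ p) ^ (1/p)
      ≤ DP.pVar p g := by
    refine le_iSup_of_le N ?_
    refine le_iSup_of_le t ?_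
    exact le_iSup_of_le ht le_rfl
  calc ∑ j : Fin N, (‖g (t j.succ) - g (t j.castSucc)‖₊ : ℝ≥0∞) ^ p
      = ((∑ j : Fin N, (‖g (t j.succ) - g (t j.castSucc)‖₊ : ℝ≥0∞) ^ p) ^ (1/p)) ^ p := by
        rw [← ENNReal.rpow_mul, one_div, inv_mul_cancel₀ hp0, ENNReal.rpow_one]
    _ ≤ DP.pVar p g ^ p := ENNReal.rpow_le_rpow h1 (by linarith)

lemma chainA (p : ℝ) (hp : 1 ≤ p) {n : ℕ} (g : ℝ → Hsp n) (M : ℕ) (c d : Fin M → ℝ)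
    (h1 : ∀ i, c i < d i) (h2 : ∀ i j : Fin M, i < j → d i < c j) :
    ∑ i, (‖g (d i) - g (c i)‖₊ : ℝ≥0∞) ^ p ≤ DP.pVar p g ^ p := by
  rcases M with _ | M'
  · simp
  · -- build partition
    set t : Fin (2 * M' + 1 + 1) → ℝ := fun j =>
      if j.val % 2 = 0 then c ⟨j.val / 2, by omega⟩ else d ⟨j.val / 2, by omega⟩ with htdef
    have ht : StrictMono t := by
      rw [Fin.strictMono_iff_lt_succ]
      intro i
      rcases Nat.even_or_odd i.val with he | ho
      · obtain ⟨q, hq⟩ := he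
        have hiv : i.val = 2 * q := by omega
        have h2q : 2 * q / 2 = q := by omega
        have h2q1 : (2 * q + 1) / 2 = q := by omega
        have : t i.castSucc = c ⟨q, by omega⟩ ∧ t i.succ = d ⟨q, by omega⟩ := by
          constructor
          · simp only [htdef, Fin.coe_castSucc, hiv]
            rw [if_pos (by omega)]
            congr 1; exact Fin.ext (by simp [h2q])
          · simp only [htdef, Fin.val_succ, hiv]
            rw [if_neg (by omega)]
            congr 1; exact Fin.ext (by simp [h2q1])
        rw [this.1, this.2]; exact h1 _
      · obtain ⟨q, hq⟩ := ho
        have h2q1 : (2 * q + 1) / 2 = q := by omega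
        have h2q2 : (2 * q + 2) / 2 = q + 1 := by omega
        have hqM : q < M' := by have := i.isLt; omega
        have : t i.castSucc = d ⟨q, by omega⟩ ∧ t i.succ = c ⟨q + 1, by omega⟩ := by
          constructor
          · simp only [htdef, Fin.coe_castSucc, hq]
            rw [if_neg (by omega)]
            congr 1; exact Fin.ext (by simp [h2q1])
          · simp only [htdef, Fin.val_succ, hq]
            rw [if_pos (by omega)]
            congr 1; exact Fin.ext (by simp; omega)
        rw [this.1, this.2]
        exact h2 _ _ (by simp [Fin.lt_def])
    have key := partition_le p hp g (2 * M' + 1) t ht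
    refine le_trans ?_ key
    -- embed
    set e : Fin (M' + 1) → Fin (2 * M' + 1) := fun i => ⟨2 * i.val, by omega⟩ with hedef
    have hinj : Function.Injective e := by
      intro a b hab
      apply Fin.ext
      have := Fin.mk.injEq .. ▸ hab
      simp [hedef, Fin.ext_iff] at hab; omega
    have hval : ∀ i : Fin (M' + 1),
        (‖g (t (e i).succ) - g (t (e i).castSucc)‖₊ : ℝ≥0∞) ^ p
          = (‖g (d i) - g (c i)‖₊ : ℝ≥0∞) ^ p := by
      intro i
      have hc : t (e i).castSucc = c i := by
        simp only [htdef, hedef, Fin.coe_castSucc]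
        rw [if_pos (by omega)]
        congr 1; exact Fin.ext (by simp)
      have hd : t (e i).succ = d i := by
        simp only [htdef, hedef, Fin.val_succ]
        rw [if_neg (by omega)]
        congr 1; exact Fin.ext (by simp; omega)
      rw [hc, hd]
    calc ∑ i : Fin (M' + 1), (‖g (d i) - g (c i)‖₊ : ℝ≥0∞) ^ p
        = ∑ i : Fin (M' + 1), (‖g (t (e i).succ) - g (t (e i).castSucc)‖₊ : ℝ≥0∞) ^ p := by
          exact Finset.sum_congr rfl fun i _ => (hval i).symm
      _ = ∑ j ∈ Finset.univ.image e, (‖g (t j.succ) - g (t j.castSucc)‖₊ : ℝ≥0∞) ^ p := by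
          rw [Finset.sum_image (fun a _ b _ h => hinj h)]
      _ ≤ ∑ j : Fin (2 * M' + 1), (‖g (t j.succ) - g (t j.castSucc)‖₊ : ℝ≥0∞) ^ p :=
          Finset.sum_le_sum_of_subset (Finset.subset_univ _)


/-- For `1 ≤ p < ∞`, `s ∈ ℝ`, `g : ℝ → L²(ℝⁿ)` of finite `p`-variation, and any
finite increasing sequence `(t_j)`, with `m_j = min (t_{j+1} - t_j) 1` (and `m_N = 1`),
`∑_j m_j^p ‖g(t_j) - g(t_j - s)‖^p ≤ 2 (1 + |s|) |g|_{V^p}^p`. -/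
theorem stmt1 (n : ℕ) (p : ℝ) (hp : 1 ≤ p) (g : ℝ → Hsp n) (hg : DP.pVar p g ≠ ⊤) (s : ℝ)
    (N : ℕ) (t : Fin (N + 1) → ℝ) (ht : StrictMono t) :
    (∑ j : Fin N,
        ENNReal.ofReal (min (t j.succ - t j.castSucc) 1) ^ p *
          (‖g (t j.castSucc) - g (t j.castSucc - s)‖₊ : ℝ≥0∞) ^ p)
      + (‖g (t (Fin.last N)) - g (t (Fin.last N) - s)‖₊ : ℝ≥0∞) ^ p
      ≤ ENNReal.ofReal (2 * (1 + |s|)) * DP.pVar p g ^ p := by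
  
  classical
  have hppos : (0:ℝ) < p := lt_of_lt_of_le one_pos hp
  by_cases hs : s = 0
  · subst hs
    simp [sub_zero, sub_self, ENNReal.zero_rpow_of_pos hppos]
  -- main case
  have hL : (0:ℝ) < |s| := abs_pos.mpr hs
  set L : ℝ := |s| with hLdef
  set a : Fin (N + 1) → ℝ := fun j => t j - max s 0 with hadef
  have hDnorm : ∀ j : Fin (N + 1),
      ‖g (a j + L) - g (a j)‖₊ = ‖g (t j) - g (t j - s)‖₊ := by
    intro j
    rcases lt_or_gt_of_ne hs with hneg | hpos
    · have h1 : max s 0 = 0 := max_eq_right hneg.le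
      have h2 : L = -s := abs_of_neg hneg
      simp only [hadef, h1, h2, sub_zero]
      rw [show t j + -s = t j - s by ring,
        show g (t j - s) - g (t j) = -(g (t j) - g (t j - s)) by abel, nnnorm_neg]
    · have h1 : max s 0 = s := max_eq_left hpos.le
      have h2 : L = s := abs_of_pos hpos
      simp only [hadef, h1, h2]
      rw [sub_add_cancel]
  set k : Fin (N + 1) → ℤ := fun j => ⌊a j / L⌋ with hkdef
  have hk1 : ∀ j, (k j : ℝ) * L ≤ a j := by
    intro j
    have := Int.floor_le (a j / L)
    rw [hkdef]
    calc (⌊a j / L⌋ : ℝ) * L ≤ (a j / L) * L := by nlinarith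
      _ = a j := by field_simp
  have hk2 : ∀ j, a j < ((k j : ℝ) + 1) * L := by
    intro j
    have := Int.lt_floor_add_one (a j / L)
    calc a j = (a j / L) * L := by field_simp
      _ < ((k j : ℝ) + 1) * L := by rw [hkdef]; nlinarith
  set Dp : Fin (N + 1) → ℝ≥0∞ := fun j => (‖g (a j + L) - g (a j)‖₊ : ℝ≥0∞) ^ p with hDpdef
  set wR : Fin (N + 1) → ℝ :=
    fun j => if h : (j : ℕ) < N then min (t ⟨(j : ℕ) + 1, by omega⟩ - t j) 1 else 1 with hwRdef
  set F : Fin (N + 1) → ℝ≥0∞ := fun j => ENNReal.ofReal (wR j) ^ p * Dp j with hFdef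
  -- rewrite LHS
  have hLHS : (∑ j : Fin N,
        ENNReal.ofReal (min (t j.succ - t j.castSucc) 1) ^ p *
          (‖g (t j.castSucc) - g (t j.castSucc - s)‖₊ : ℝ≥0∞) ^ p)
      + (‖g (t (Fin.last N)) - g (t (Fin.last N) - s)‖₊ : ℝ≥0∞) ^ p = ∑ j, F j := by
    rw [Fin.sum_univ_castSucc (f := F)]
    congr 1
    · refine Finset.sum_congr rfl fun j _ => ?_
      have h1 : wR j.castSucc = min (t j.succ - t j.castSucc) 1 := by
        simp only [hwRdef]
        rw [dif_pos (by simpa using j.isLt)]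
        have he : (⟨(j.castSucc : ℕ) + 1, by
            have := j.isLt; simp only [Fin.coe_castSucc]; omega⟩ : Fin (N + 1)) = j.succ :=
          Fin.ext (by simp)
        rw [he]
      rw [hFdef]
      simp only []
      rw [h1, hDpdef]
      simp only []
      rw [hDnorm]
    · have h1 : wR (Fin.last N) = 1 := by
        simp only [hwRdef]
        rw [dif_neg (by simp)]
      rw [hFdef]
      simp only []
      rw [h1, ENNReal.ofReal_one, ENNReal.one_rpow, one_mul, hDpdef]
      simp only []
      rw [hDnorm]
  rw [hLHS]
  -- selection of maximizers
  have hsel : ∀ k' ∈ Finset.univ.image k, ∃ j0 : Fin (N + 1),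
      k j0 = k' ∧ ∀ j', k j' = k' → Dp j' ≤ Dp j0 := by
    intro k' hk'
    obtain ⟨j1, _, hj1⟩ := Finset.mem_image.mp hk'
    obtain ⟨j0, hj0mem, hj0max⟩ := Finset.exists_max_image
      (Finset.univ.filter (fun j => k j = k')) Dp ⟨j1, by simp [hj1]⟩
    exact ⟨j0, (Finset.mem_filter.mp hj0mem).2,
      fun j' hj' => hj0max j' (by simp [hj'])⟩
  choose! jstar hjk hjmax using hsel
  -- fiber bound
  have hwR0 : ∀ j, 0 ≤ wR j := by
    intro j
    simp only [hwRdef]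
    split
    · rename_i h
      refine le_min ?_ zero_le_one
      have : t j < t ⟨(j : ℕ) + 1, by omega⟩ := ht (by simp [Fin.lt_def])
      linarith
    · exact zero_le_one
  have hwR1 : ∀ j, wR j ≤ 1 := by
    intro j
    simp only [hwRdef]
    split
    · exact min_le_right _ _
    · exact le_rfl
  set T : ℕ → ℝ := fun i => t ⟨min i N, by omega⟩ with hTdef
  have hTj : ∀ j : Fin (N + 1), T (j : ℕ) = t j := by
    intro j
    simp only [hTdef]
    exact congrArg t (Fin.ext (by simp; omega))
  have hTmono : Monotone T := by
    intro i i' h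
    exact ht.monotone (by simp [Fin.le_def]; omega)
  have hreal : ∀ k' ∈ Finset.univ.image k,
      ∑ j ∈ Finset.univ.filter (fun j => k j = k'), wR j ≤ 1 + L := by
    intro k' hk'
    set fib := Finset.univ.filter (fun j => k j = k') with hfibdef
    obtain ⟨j1, _, hj1⟩ := Finset.mem_image.mp hk'
    have hne : fib.Nonempty := ⟨j1, by simp [hfibdef, hj1]⟩
    set jM := fib.max' hne with hjMdef
    set jm := fib.min' hne with hjmdef
    have hjMk : k jM = k' := (Finset.mem_filter.mp (fib.max'_mem hne)).2
    have hjmk : k jm = k' := (Finset.mem_filter.mp (fib.min'_mem hne)).2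
    rw [← Finset.add_sum_erase _ _ (fib.max'_mem hne)]
    have hstep1 : ∑ j ∈ fib.erase jM, wR j
        ≤ ∑ j ∈ fib.erase jM, (T ((j : ℕ) + 1) - T (j : ℕ)) := by
      refine Finset.sum_le_sum fun j hj => ?_
      have hjfib := Finset.mem_of_mem_erase hj
      have hjne := Finset.ne_of_mem_erase hj
      have hjlt : j < jM := lt_of_le_of_ne (fib.le_max' j hjfib) hjne
      have hjN : (j : ℕ) < N := by
        have := Fin.lt_def.mp hjlt
        have := jM.isLt
        omega
      have h1 : wR j = min (t ⟨(j : ℕ) + 1, by omega⟩ - t j) 1 := by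
        simp only [hwRdef]; rw [dif_pos hjN]
      have h2 : T ((j : ℕ) + 1) = t ⟨(j : ℕ) + 1, by omega⟩ := by
        simp only [hTdef]
        exact congrArg t (Fin.ext (by simp; omega))
      rw [h1, h2, hTj]
      exact min_le_left _ _
    have hstep2 : ∑ j ∈ fib.erase jM, (T ((j : ℕ) + 1) - T (j : ℕ))
        ≤ T (jM : ℕ) - T (jm : ℕ) := by
      rw [show (∑ j ∈ fib.erase jM, (T ((j : ℕ) + 1) - T (j : ℕ)))
          = ∑ i ∈ (fib.erase jM).image Fin.val, (T (i + 1) - T i) by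
        rw [Finset.sum_image (fun x _ y _ h => Fin.ext h)]]
      have hsub : (fib.erase jM).image Fin.val ⊆ Finset.Ico (jm : ℕ) (jM : ℕ) := by
        intro i hi
        obtain ⟨j, hj, rfl⟩ := Finset.mem_image.mp hi
        have hjfib := Finset.mem_of_mem_erase hj
        have hjne := Finset.ne_of_mem_erase hj
        have hjlt : j < jM := lt_of_le_of_ne (fib.le_max' j hjfib) hjne
        have hjge : jm ≤ j := fib.min'_le j hjfib
        rw [Finset.mem_Ico]
        exact ⟨Fin.le_def.mp hjge, Fin.lt_def.mp hjlt⟩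
      calc ∑ i ∈ (fib.erase jM).image Fin.val, (T (i + 1) - T i)
          ≤ ∑ i ∈ Finset.Ico (jm : ℕ) (jM : ℕ), (T (i + 1) - T i) :=
            Finset.sum_le_sum_of_subset_of_nonneg hsub
              (fun i _ _ => sub_nonneg.mpr (hTmono (Nat.le_succ i)))
        _ = T (jM : ℕ) - T (jm : ℕ) := by
            rw [Finset.sum_Ico_eq_sub _ (Fin.le_def.mp (fib.min'_le jM (fib.max'_mem hne))),
              Finset.sum_range_sub (f := T), Finset.sum_range_sub (f := T)]
            ring
    have hdiff : T (jM : ℕ) - T (jm : ℕ) ≤ L := by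
      rw [hTj, hTj]
      have h1 := hk2 jM
      have h2 := hk1 jm
      rw [hjMk] at h1
      rw [hjmk] at h2
      have haa : a jM - a jm = t jM - t jm := by simp only [hadef]; ring
      nlinarith [h1, h2, haa]
    have hwM : wR jM ≤ 1 := hwR1 jM
    linarith
  have hfiber : ∀ k' ∈ Finset.univ.image k,
      ∑ j ∈ Finset.univ.filter (fun j => k j = k'), F j
        ≤ ENNReal.ofReal (1 + L) * Dp (jstar k') := by
    intro k' hk'
    calc ∑ j ∈ Finset.univ.filter (fun j => k j = k'), F j
        ≤ ∑ j ∈ Finset.univ.filter (fun j => k j = k'),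
            ENNReal.ofReal (wR j) ^ p * Dp (jstar k') := by
          refine Finset.sum_le_sum fun j hj => ?_
          exact mul_le_mul_right (hjmax k' hk' j (Finset.mem_filter.mp hj).2) _
      _ = (∑ j ∈ Finset.univ.filter (fun j => k j = k'),
            ENNReal.ofReal (wR j) ^ p) * Dp (jstar k') := by rw [Finset.sum_mul]
      _ ≤ ENNReal.ofReal (1 + L) * Dp (jstar k') := by
          refine mul_le_mul_left ?_ _
          calc ∑ j ∈ Finset.univ.filter (fun j => k j = k'), ENNReal.ofReal (wR j) ^ p
              ≤ ∑ j ∈ Finset.univ.filter (fun j => k j = k'), ENNReal.ofReal (wR j) := by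
                refine Finset.sum_le_sum fun j _ => ?_
                calc ENNReal.ofReal (wR j) ^ p
                    ≤ ENNReal.ofReal (wR j) ^ (1:ℝ) :=
                      ENNReal.rpow_le_rpow_of_exponent_ge
                        (ENNReal.ofReal_le_one.mpr (hwR1 j)) hp
                  _ = ENNReal.ofReal (wR j) := ENNReal.rpow_one _
            _ = ENNReal.ofReal (∑ j ∈ Finset.univ.filter (fun j => k j = k'), wR j) :=
                (ENNReal.ofReal_sum_of_nonneg fun j _ => hwR0 j).symm
            _ ≤ ENNReal.ofReal (1 + L) := ENNReal.ofReal_le_ofReal (hreal k' hk')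
  -- class bound
  have hclass : ∀ P : Finset ℤ, P ⊆ Finset.univ.image k →
      (∀ x ∈ P, ∀ y ∈ P, x < y → x + 2 ≤ y) →
      ∑ k' ∈ P, Dp (jstar k') ≤ DP.pVar p g ^ p := by
    intro P hPsub hPgap
    set M := P.card with hMdef
    set e := P.orderIsoOfFin rfl with hedef
    set c : Fin M → ℝ := fun i => a (jstar ((e i : ℤ))) with hcdef
    have hkc : ∀ i : Fin M, k (jstar ((e i : ℤ))) = (e i : ℤ) := fun i =>
      hjk _ (hPsub (e i).2)
    have hsum : ∑ k' ∈ P, Dp (jstar k') = ∑ i : Fin M, Dp (jstar ((e i : ℤ))) := by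
      rw [← Finset.sum_attach P (fun k' => Dp (jstar k'))]
      exact (Fintype.sum_equiv e.toEquiv _ _ (fun i => rfl)).symm
    rw [hsum]
    have h1 : ∀ i : Fin M, c i < c i + L := fun i => by linarith
    have h2 : ∀ i i' : Fin M, i < i' → c i + L < c i' := by
      intro i i' hii
      have hlt : (e i : ℤ) < (e i' : ℤ) := by
        exact_mod_cast (e.lt_iff_lt.mpr hii)
      have hgap : (e i : ℤ) + 2 ≤ (e i' : ℤ) := hPgap _ (e i).2 _ (e i').2 hlt
      have hub := hk2 (jstar ((e i : ℤ)))
      have hlb := hk1 (jstar ((e i' : ℤ)))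
      rw [hkc i] at hub
      rw [hkc i'] at hlb
      have hcast : ((e i : ℤ) : ℝ) + 2 ≤ ((e i' : ℤ) : ℝ) := by exact_mod_cast hgap
      simp only [hcdef]
      nlinarith
    have := chainA p hp g M c (fun i => c i + L) h1 h2
    calc ∑ i : Fin M, Dp (jstar ((e i : ℤ)))
        = ∑ i : Fin M, (‖g (c i + L) - g (c i)‖₊ : ℝ≥0∞) ^ p := rfl
      _ ≤ DP.pVar p g ^ p := this
  -- assemble
  have hmapsto : ∀ j ∈ (Finset.univ : Finset (Fin (N + 1))), k j ∈ Finset.univ.image k :=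
    fun j _ => Finset.mem_image_of_mem k (Finset.mem_univ j)
  have hclassbound : ∀ P : Finset ℤ, P ⊆ Finset.univ.image k →
      (∀ x ∈ P, ∀ y ∈ P, x < y → x + 2 ≤ y) →
      ∑ k' ∈ P, ∑ j ∈ Finset.univ.filter (fun j => k j = k'), F j
        ≤ ENNReal.ofReal (1 + L) * DP.pVar p g ^ p := by
    intro P hPsub hPgap
    calc ∑ k' ∈ P, ∑ j ∈ Finset.univ.filter (fun j => k j = k'), F j
        ≤ ∑ k' ∈ P, ENNReal.ofReal (1 + L) * Dp (jstar k') :=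
          Finset.sum_le_sum fun k' hk' => hfiber k' (hPsub hk')
      _ = ENNReal.ofReal (1 + L) * ∑ k' ∈ P, Dp (jstar k') := by rw [Finset.mul_sum]
      _ ≤ ENNReal.ofReal (1 + L) * DP.pVar p g ^ p :=
          mul_le_mul_right (hclass P hPsub hPgap) _
  calc ∑ j, F j
      = ∑ k' ∈ Finset.univ.image k, ∑ j ∈ Finset.univ.filter (fun j => k j = k'), F j :=
        (Finset.sum_fiberwise_of_maps_to hmapsto F).symm
    _ = (∑ k' ∈ (Finset.univ.image k).filter (fun x => x % 2 = 0),
            ∑ j ∈ Finset.univ.filter (fun j => k j = k'), F j)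
        + ∑ k' ∈ (Finset.univ.image k).filter (fun x => ¬ x % 2 = 0),
            ∑ j ∈ Finset.univ.filter (fun j => k j = k'), F j :=
        (Finset.sum_filter_add_sum_filter_not _ _ _).symm
    _ ≤ ENNReal.ofReal (1 + L) * DP.pVar p g ^ p
        + ENNReal.ofReal (1 + L) * DP.pVar p g ^ p := by
        refine add_le_add ?_ ?_
        · refine hclassbound _ (Finset.filter_subset _ _) ?_
          intro x hx y hy hxy
          have hx2 := (Finset.mem_filter.mp hx).2
          have hy2 := (Finset.mem_filter.mp hy).2
          omega
        · refine hclassbound _ (Finset.filter_subset _ _) ?_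
          intro x hx y hy hxy
          have hx2 := (Finset.mem_filter.mp hx).2
          have hy2 := (Finset.mem_filter.mp hy).2
          omega
    _ = ENNReal.ofReal (2 * (1 + |s|)) * DP.pVar p g ^ p := by
        rw [← two_mul, ← mul_assoc]
        congr 1
        rw [show (2:ℝ≥0∞) = ENNReal.ofReal 2 by simp,
          ← ENNReal.ofReal_mul (by norm_num)]
end
end

section
/- Let $1 \leq p \leq 2$ and for each $k \in \mathbb{N}$ let $T_k : L^2(\mathbb{R}^n) \to L^2(\mathbb{R}^n)$ be bounded linear operators such that $(\sum_k \|T_k f\|_{L^2}^2)^{1/2} \leq M_2 \|f\|_{L^2}$ for all $f \in L^2$. Then for every $u \in U^p$, applying $T_k$ pointwise in time, $(\sum_k \|T_k u\|_{U^p}^2)^{1/2} \leq M_2 \|u\|_{U^p}$. -/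
/-!
Applying `T k` to a step function with values `f j` gives the step function with values
`T k (f j)`, which is `b k = ‖(T k (f j))ⱼ‖_{ℓ^p}` times an atom. If the `f j` form an atom,
Minkowski's inequality in `ℓ^{2/p}` (this is where `p ≤ 2` enters) gives
`‖b‖_{ℓ²} ≤ ‖(‖(T k (f j))ₖ‖_{ℓ²})ⱼ‖_{ℓ^p} ≤ M₂`. For `u = ∑ c j • a j` with atoms `a j`,
Minkowski's inequality in `ℓ²` then bounds `‖(‖T k u‖_{U^p})ₖ‖_{ℓ²}` by `M₂ ∑ |c j|`, and one takes
the infimum over representations. When `M₂` is `0` or `∞` this infimum cannot be pulled out of the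
product, and the single-operator bound `‖T u‖_{U^p} ≤ ‖T‖ ‖u‖_{U^p}` is used instead.
-/

open MeasureTheory ENNReal Filter

noncomputable section

namespace ENNReal

theorem iSup_rpow {ι : Sort*} (f : ι → ℝ≥0∞) {r : ℝ} (hr : 0 < r) :
    (⨆ i, f i) ^ r = ⨆ i, f i ^ r :=
  (orderIsoRpow r hr).map_iSup f

theorem tsum_iSup_of_monotone {ι κ : Type*} [Preorder ι] [IsDirectedOrder ι]
    (g : ι → κ → ℝ≥0∞) (hg : ∀ k, Monotone fun i => g i k) :
    ∑' k, ⨆ i, g i k = ⨆ i, ∑' k, g i k :=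
  calc ∑' k, ⨆ i, g i k = ⨆ s : Finset κ, ∑ k ∈ s, ⨆ i, g i k := ENNReal.tsum_eq_iSup_sum
    _ = ⨆ s : Finset κ, ⨆ i, ∑ k ∈ s, g i k := by
        simp only [finsetSum_iSup_of_monotone hg]
    _ = ⨆ i, ∑' k, g i k := by
        rw [iSup_comm]; simp only [← ENNReal.tsum_eq_iSup_sum]

theorem Lp_add_le_tsum {κ : Type*} (f g : κ → ℝ≥0∞) {r : ℝ} (hr : 1 ≤ r) :
    (∑' k, (f k + g k) ^ r) ^ (1 / r) ≤ (∑' k, f k ^ r) ^ (1 / r) + (∑' k, g k ^ r) ^ (1 / r) := by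
  have h1r : 0 < 1 / r := one_div_pos.2 (by linarith)
  rw [ENNReal.tsum_eq_iSup_sum, iSup_rpow _ h1r]
  exact iSup_le fun s => (Lp_add_le s f g hr).trans <|
    add_le_add (rpow_le_rpow (ENNReal.sum_le_tsum s) h1r.le)
      (rpow_le_rpow (ENNReal.sum_le_tsum s) h1r.le)

theorem Lp_finsetSum_le_tsum {ι κ : Type*} (s : Finset ι) (z : ι → κ → ℝ≥0∞) {r : ℝ}
    (hr : 1 ≤ r) :
    (∑' k, (∑ j ∈ s, z j k) ^ r) ^ (1 / r) ≤ ∑ j ∈ s, (∑' k, z j k ^ r) ^ (1 / r) := by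
  classical
  have hr0 : 0 < r := by linarith
  induction s using Finset.induction_on with
  | empty => simp [zero_rpow_of_pos hr0, hr0]
  | insert j s hj ih =>
    simp only [Finset.sum_insert hj]
    exact (Lp_add_le_tsum _ _ hr).trans (add_le_add le_rfl ih)

theorem Lp_tsum_le_tsum {ι κ : Type*} (z : ι → κ → ℝ≥0∞) {r : ℝ} (hr : 1 ≤ r) :
    (∑' k, (∑' j, z j k) ^ r) ^ (1 / r) ≤ ∑' j, (∑' k, z j k ^ r) ^ (1 / r) := by
  have hr0 : 0 < r := by linarith
  have hmono : ∀ k, Monotone fun s : Finset ι => (∑ j ∈ s, z j k) ^ r := fun k _ _ h =>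
    rpow_le_rpow (Finset.sum_le_sum_of_subset h) hr0.le
  calc (∑' k, (∑' j, z j k) ^ r) ^ (1 / r)
      = (⨆ s : Finset ι, ∑' k, (∑ j ∈ s, z j k) ^ r) ^ (1 / r) := by
        simp only [ENNReal.tsum_eq_iSup_sum (f := fun j => z j _), iSup_rpow _ hr0,
          tsum_iSup_of_monotone _ hmono]
    _ = ⨆ s : Finset ι, (∑' k, (∑ j ∈ s, z j k) ^ r) ^ (1 / r) := iSup_rpow _ (by positivity)
    _ ≤ ∑' j, (∑' k, z j k ^ r) ^ (1 / r) :=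
        iSup_le fun s => (Lp_finsetSum_le_tsum s z hr).trans (ENNReal.sum_le_tsum s)

theorem L2_Lp_le_Lp_L2 {ι κ : Type*} [Fintype ι] {p : ℝ} (hp0 : 0 < p) (hp2 : p ≤ 2)
    (a : ι → κ → ℝ≥0∞) :
    (∑' k, ((∑ j, a j k ^ p) ^ (1 / p)) ^ (2 : ℝ)) ^ ((1 : ℝ) / 2) ≤
      (∑ j, ((∑' k, a j k ^ (2 : ℝ)) ^ ((1 : ℝ) / 2)) ^ p) ^ (1 / p) := by
  have e₁ : 1 / p * 2 = 2 / p := by ring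
  have e₂ : 1 / 2 * p = 1 / (2 / p) := by field_simp
  have e₃ : p * (2 / p) = 2 := by field_simp
  -- raised to the power `p`, this is Minkowski's inequality in `ℓ^{2/p}` for the `a j k ^ p`
  rw [← rpow_le_rpow_iff hp0]
  convert Lp_finsetSum_le_tsum Finset.univ (fun j k => a j k ^ p)
    ((one_le_div hp0).2 hp2) using 1 <;>
    simp only [← rpow_mul, e₁, e₂, e₃, one_div_mul_cancel hp0.ne', rpow_one]

end ENNReal

namespace DP

variable {n : ℕ}

section StepNorm

variable {ι E F : Type*} [Fintype ι] [SeminormedAddCommGroup E] [SeminormedAddCommGroup F]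
  {p : ℝ}

/-- The `ℓ^p` norm of the values of a step function; an atom is a step function with
`stepNorm p f = 1`. -/
def stepNorm (p : ℝ) (f : ι → E) : ℝ := (∑ j, ‖f j‖ ^ p) ^ (1 / p)

lemma stepNorm_nonneg (f : ι → E) : 0 ≤ stepNorm p f :=
  Real.rpow_nonneg (Finset.sum_nonneg fun _ _ => Real.rpow_nonneg (norm_nonneg _) _) _

lemma stepNorm_mono (hp : 0 < p) {f : ι → E} {g : ι → F} (h : ∀ j, ‖f j‖ ≤ ‖g j‖) :
    stepNorm p f ≤ stepNorm p g :=
  Real.rpow_le_rpow (Finset.sum_nonneg fun _ _ => Real.rpow_nonneg (norm_nonneg _) _)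
    (Finset.sum_le_sum fun j _ => Real.rpow_le_rpow (norm_nonneg _) (h j) hp.le)
    (one_div_pos.2 hp).le

lemma stepNorm_smul [NormedSpace ℝ E] (hp : 0 < p) (b : ℝ) (f : ι → E) :
    stepNorm p (b • f) = |b| * stepNorm p f := by
  simp only [stepNorm, Pi.smul_apply, norm_smul, Real.norm_eq_abs,
    Real.mul_rpow (abs_nonneg b) (norm_nonneg _), ← Finset.mul_sum]
  rw [Real.mul_rpow (Real.rpow_nonneg (abs_nonneg b) _)
    (Finset.sum_nonneg fun _ _ => Real.rpow_nonneg (norm_nonneg _) _),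
    ← Real.rpow_mul (abs_nonneg b), mul_one_div_cancel hp.ne', Real.rpow_one]

lemma eq_zero_of_stepNorm_eq_zero (hp : 0 < p) {f : ι → E} (h : stepNorm p f = 0) (j : ι) :
    ‖f j‖ = 0 := by
  have hsum : ∑ j, ‖f j‖ ^ p = 0 := by
    rwa [stepNorm, Real.rpow_eq_zero (Finset.sum_nonneg fun _ _ =>
      Real.rpow_nonneg (norm_nonneg _) _) (one_div_pos.2 hp).ne'] at h
  have := (Finset.sum_eq_zero_iff_of_nonneg fun _ _ => Real.rpow_nonneg (norm_nonneg _) _).1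
    hsum j (Finset.mem_univ j)
  rwa [Real.rpow_eq_zero (norm_nonneg _) hp.ne'] at this

lemma ofReal_stepNorm (hp : 0 < p) (f : ι → E) :
    ENNReal.ofReal (stepNorm p f) = (∑ j, ‖f j‖ₑ ^ p) ^ (1 / p) := by
  rw [stepNorm, ← ENNReal.ofReal_rpow_of_nonneg (Finset.sum_nonneg fun _ _ =>
      Real.rpow_nonneg (norm_nonneg _) _) (one_div_pos.2 hp).le,
    ENNReal.ofReal_sum_of_nonneg fun _ _ => Real.rpow_nonneg (norm_nonneg _) _]
  simp only [← ENNReal.ofReal_rpow_of_nonneg (norm_nonneg _) hp.le, ofReal_norm]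

lemma stepNorm_comp_le [NormedSpace ℝ E] (hp : 0 < p) {T : E → F} {C : ℝ} (hC : 0 ≤ C)
    (hT : ∀ x, ‖T x‖ ≤ C * ‖x‖) (f : ι → E) :
    stepNorm p (fun j => T (f j)) ≤ C * stepNorm p f :=
  calc stepNorm p (fun j => T (f j)) ≤ stepNorm p (C • f) :=
        stepNorm_mono hp fun j => by simpa [norm_smul, abs_of_nonneg hC] using hT (f j)
    _ = C * stepNorm p f := by rw [stepNorm_smul hp, abs_of_nonneg hC]

lemma tsum_stepNorm_sq_le {κ : Type*} (hp0 : 0 < p) (hp2 : p ≤ 2) (T : κ → E → F) (M : ℝ≥0∞)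
    (hT : ∀ x, (∑' k, (‖T k x‖₊ : ℝ≥0∞) ^ (2 : ℝ)) ^ ((1 : ℝ) / 2) ≤ M * (‖x‖₊ : ℝ≥0∞))
    (f : ι → E) :
    (∑' k, ENNReal.ofReal (stepNorm p fun j => T k (f j)) ^ (2 : ℝ)) ^ ((1 : ℝ) / 2) ≤
      M * ENNReal.ofReal (stepNorm p f) := by
  simp only [ofReal_stepNorm hp0]
  calc _ ≤ (∑ j, ((∑' k, ‖T k (f j)‖ₑ ^ (2 : ℝ)) ^ ((1 : ℝ) / 2)) ^ p) ^ (1 / p) :=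
        ENNReal.L2_Lp_le_Lp_L2 hp0 hp2 fun j k => ‖T k (f j)‖ₑ
    _ ≤ (∑ j, (M * ‖f j‖ₑ) ^ p) ^ (1 / p) := by
        gcongr with j
        exact hT (f j)
    _ = M * (∑ j, ‖f j‖ₑ ^ p) ^ (1 / p) := by
        simp only [mul_rpow_of_nonneg _ _ hp0.le, ← Finset.mul_sum]
        rw [mul_rpow_of_nonneg _ _ (one_div_pos.2 hp0).le, ← rpow_mul,
          mul_one_div_cancel hp0.ne', rpow_one]

end StepNorm

section UpNorm

variable {p : ℝ}

lemma stepFun_map {G : Type*} [FunLike G (Hsp n) (Hsp n)] [AddMonoidHomClass G (Hsp n) (Hsp n)]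
    (L : G) (N : ℕ) (t : Fin (N + 1) → ℝ) (f : Fin (N + 1) → Hsp n) :
    stepFun N t (fun j => L (f j)) = fun s => L (stepFun N t f s) := by
  ext1 s
  simp only [stepFun, map_add, map_sum, Set.indicator_apply, apply_ite L, map_zero]

lemma stepFun_smul (b : ℝ) (N : ℕ) (t : Fin (N + 1) → ℝ) (f : Fin (N + 1) → Hsp n) :
    stepFun N t (b • f) = b • stepFun N t f :=
  stepFun_map (DistribSMul.toAddMonoidHom (Hsp n) b) N t f

lemma exists_norm_eq_one : ∃ g : Hsp n, ‖g‖ = 1 := by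
  have hball := Metric.measure_ball_pos (volume : Measure (EuclideanSpace ℝ (Fin n))) 0 one_pos
  set g : Hsp n := indicatorConstLp 2 measurableSet_ball measure_ball_lt_top.ne (1 : ℂ)
  have hg : g ≠ 0 := by
    rw [← norm_pos_iff, norm_indicatorConstLp two_ne_zero ofNat_ne_top]
    simp only [norm_one, one_mul]
    exact Real.rpow_pos_of_pos (ENNReal.toReal_pos hball.ne' measure_ball_lt_top.ne) _
  exact ⟨_, norm_smul_inv_norm (𝕜 := ℂ) hg⟩

lemma exists_isUpAtom (p : ℝ) : ∃ a : ℝ → Hsp n, IsUpAtom p a := by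
  obtain ⟨g, hg⟩ := exists_norm_eq_one (n := n)
  exact ⟨_, 0, fun _ => 0, fun _ => g, Subsingleton.strictMono (α := Fin 1) _, rfl, by simp [hg]⟩

lemma stepFun_eq_smul_isUpAtom (hp : 0 < p) {N : ℕ} {t : Fin (N + 1) → ℝ} (ht : StrictMono t)
    (f : Fin (N + 1) → Hsp n) : ∃ a, IsUpAtom p a ∧ stepFun N t f = stepNorm p f • a := by
  rcases eq_or_ne (stepNorm p f) 0 with h0 | h0
  · obtain ⟨a, ha⟩ := exists_isUpAtom (n := n) p
    have hf : f = 0 := funext fun j => norm_eq_zero.1 (eq_zero_of_stepNorm_eq_zero hp h0 j)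
    refine ⟨a, ha, ?_⟩
    rw [h0, zero_smul, hf]
    simpa using stepFun_smul 0 N t 0
  · refine ⟨stepFun N t ((stepNorm p f)⁻¹ • f), ⟨N, t, _, ht, rfl, ?_⟩, ?_⟩
    · change stepNorm p _ = 1
      rw [stepNorm_smul hp, abs_inv, abs_of_nonneg (stepNorm_nonneg f), inv_mul_cancel₀ h0]
    · rw [stepFun_smul, smul_smul, mul_inv_cancel₀ h0, one_smul]

lemma upNorm_le_of_hasSum {u : ℝ → Hsp n} {c : ℕ → ℝ} {a : ℕ → ℝ → Hsp n}
    (ha : ∀ j, IsUpAtom p (a j)) (hc : Summable fun j => |c j|)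
    (hu : ∀ s, HasSum (fun j => c j • a j s) (u s)) :
    UpNorm p u ≤ ENNReal.ofReal (∑' j, |c j|) :=
  iInf_le_of_le c <| iInf_le_of_le a <| iInf_le_of_le ha <| iInf_le_of_le hc <| iInf_le _ hu

lemma upNorm_zero : UpNorm p (fun _ : ℝ => (0 : Hsp n)) = 0 := by
  obtain ⟨a, ha⟩ := exists_isUpAtom (n := n) p
  simpa using upNorm_le_of_hasSum (u := fun _ => 0) (c := 0) (fun _ => ha) (by simp [summable_zero])
    fun s => by simp [hasSum_zero]

lemma le_mul_upNorm {x C : ℝ≥0∞} (hC₀ : C ≠ 0) (hC : C ≠ ⊤) {u : ℝ → Hsp n}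
    (h : ∀ (c : ℕ → ℝ) (a : ℕ → ℝ → Hsp n), (∀ j, IsUpAtom p (a j)) →
      (Summable fun j => |c j|) → (∀ s, HasSum (fun j => c j • a j s) (u s)) →
        x ≤ C * ENNReal.ofReal (∑' j, |c j|)) :
    x ≤ C * UpNorm p u := by
  simpa only [UpNorm, ENNReal.mul_iInf_of_ne hC₀ hC, le_iInf_iff] using h

lemma upNorm_le_of_hasSum_stepFun (hp : 0 < p) {u : ℝ → Hsp n} {c : ℕ → ℝ} {N : ℕ → ℕ}
    {t : ∀ j, Fin (N j + 1) → ℝ} {f : ∀ j, Fin (N j + 1) → Hsp n} (ht : ∀ j, StrictMono (t j))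
    (hc : Summable fun j => |c j| * stepNorm p (f j))
    (hu : ∀ s, HasSum (fun j => c j • stepFun (N j) (t j) (f j) s) (u s)) :
    UpNorm p u ≤ ENNReal.ofReal (∑' j, |c j| * stepNorm p (f j)) := by
  choose a ha hf using fun j => stepFun_eq_smul_isUpAtom hp (ht j) (f j)
  have habs : ∀ j, |c j * stepNorm p (f j)| = |c j| * stepNorm p (f j) := fun j => by
    rw [abs_mul, abs_of_nonneg (stepNorm_nonneg _)]
  simpa only [habs] using upNorm_le_of_hasSum (c := fun j => c j * stepNorm p (f j)) ha
    (by simpa only [habs] using hc) fun s => by simpa only [hf, Pi.smul_apply, mul_smul] using hu s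

lemma upNorm_map_le_of_hasSum (hp : 0 < p) (T : Hsp n →L[ℂ] Hsp n) {u : ℝ → Hsp n}
    {c : ℕ → ℝ} {N : ℕ → ℕ} {t : ∀ j, Fin (N j + 1) → ℝ} {f : ∀ j, Fin (N j + 1) → Hsp n}
    (ht : ∀ j, StrictMono (t j)) (hf : ∀ j, stepNorm p (f j) = 1)
    (hc : Summable fun j => |c j|)
    (hu : ∀ s, HasSum (fun j => c j • stepFun (N j) (t j) (f j) s) (u s)) :
    UpNorm p (fun s => T (u s)) ≤
      ∑' j, ENNReal.ofReal |c j| * ENNReal.ofReal (stepNorm p fun i => T (f j i)) := by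
  have hTf : ∀ j, stepNorm p (fun i => T (f j i)) ≤ ‖T‖ := fun j => by
    simpa [hf j] using stepNorm_comp_le hp (norm_nonneg T) T.le_opNorm (f j)
  have hsumm : Summable fun j => |c j| * stepNorm p fun i => T (f j i) :=
    (hc.mul_right ‖T‖).of_nonneg_of_le (fun j => mul_nonneg (abs_nonneg _) (stepNorm_nonneg _))
      fun j => mul_le_mul_of_nonneg_left (hTf j) (abs_nonneg _)
  calc UpNorm p (fun s => T (u s))
      ≤ ENNReal.ofReal (∑' j, |c j| * stepNorm p fun i => T (f j i)) :=
        upNorm_le_of_hasSum_stepFun hp ht hsumm fun s => by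
          simpa only [stepFun_map, ContinuousLinearMap.map_smul_of_tower] using T.hasSum (hu s)
    _ = _ := by
        rw [ENNReal.ofReal_tsum_of_nonneg
          (fun j => mul_nonneg (abs_nonneg _) (stepNorm_nonneg _)) hsumm]
        simp only [ENNReal.ofReal_mul (abs_nonneg _)]

lemma upNorm_map_le (hp : 0 < p) (T : Hsp n →L[ℂ] Hsp n) (u : ℝ → Hsp n) :
    UpNorm p (fun s => T (u s)) ≤ ENNReal.ofReal ‖T‖ * UpNorm p u := by
  rcases eq_or_ne T 0 with rfl | hT
  · simpa using (upNorm_zero (n := n) (p := p)).le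
  refine le_mul_upNorm (ENNReal.ofReal_pos.2 (norm_pos_iff.2 hT)).ne' ofReal_ne_top
    fun c a ha hc hu => ?_
  choose N t f ht hat hf using ha
  change ∀ j, stepNorm p (f j) = 1 at hf
  obtain rfl : a = fun j => stepFun (N j) (t j) (f j) := funext hat
  calc UpNorm p (fun s => T (u s))
      ≤ ∑' j, ENNReal.ofReal |c j| * ENNReal.ofReal (stepNorm p fun i => T (f j i)) :=
        upNorm_map_le_of_hasSum hp T ht hf hc hu
    _ ≤ ∑' j, ENNReal.ofReal |c j| * ENNReal.ofReal ‖T‖ := by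
        gcongr with j
        simpa [hf j] using stepNorm_comp_le hp (norm_nonneg T) T.le_opNorm (f j)
    _ = ENNReal.ofReal ‖T‖ * ENNReal.ofReal (∑' j, |c j|) := by
        rw [ENNReal.tsum_mul_right, ENNReal.ofReal_tsum_of_nonneg (fun _ => abs_nonneg _) hc,
          mul_comm]

lemma tsum_upNorm_map_sq_le_of_hasSum (hp : 0 < p) (hp2 : p ≤ 2) (T : ℕ → Hsp n →L[ℂ] Hsp n)
    (M : ℝ≥0∞)
    (hT : ∀ f : Hsp n, (∑' k, (‖T k f‖₊ : ℝ≥0∞) ^ (2 : ℝ)) ^ ((1 : ℝ) / 2) ≤ M * (‖f‖₊ : ℝ≥0∞))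
    {u : ℝ → Hsp n} {c : ℕ → ℝ} {a : ℕ → ℝ → Hsp n} (ha : ∀ j, IsUpAtom p (a j))
    (hc : Summable fun j => |c j|) (hu : ∀ s, HasSum (fun j => c j • a j s) (u s)) :
    (∑' k, UpNorm p (fun s => T k (u s)) ^ (2 : ℝ)) ^ ((1 : ℝ) / 2) ≤
      M * ENNReal.ofReal (∑' j, |c j|) := by
  choose N t f ht hat hf using ha
  change ∀ j, stepNorm p (f j) = 1 at hf
  obtain rfl : a = fun j => stepFun (N j) (t j) (f j) := funext hat
  set b : ℕ → ℕ → ℝ≥0∞ := fun j k => ENNReal.ofReal (stepNorm p fun i => T k (f j i))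
  calc (∑' k, UpNorm p (fun s => T k (u s)) ^ (2 : ℝ)) ^ ((1 : ℝ) / 2)
      ≤ (∑' k, (∑' j, ENNReal.ofReal |c j| * b j k) ^ (2 : ℝ)) ^ ((1 : ℝ) / 2) := by
        gcongr with k
        exact upNorm_map_le_of_hasSum hp (T k) ht hf hc hu
    _ ≤ ∑' j, (∑' k, (ENNReal.ofReal |c j| * b j k) ^ (2 : ℝ)) ^ ((1 : ℝ) / 2) :=
        ENNReal.Lp_tsum_le_tsum _ one_le_two
    _ = ∑' j, ENNReal.ofReal |c j| * (∑' k, b j k ^ (2 : ℝ)) ^ ((1 : ℝ) / 2) := by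
        simp only [mul_rpow_of_nonneg _ _ zero_le_two, ENNReal.tsum_mul_left,
          mul_rpow_of_nonneg _ _ one_half_pos.le, ← rpow_mul]
        norm_num
    _ ≤ ∑' j, ENNReal.ofReal |c j| * M := by
        gcongr with j
        simpa [b, hf j] using tsum_stepNorm_sq_le hp hp2 (fun k => ⇑(T k)) M hT (f j)
    _ = M * ENNReal.ofReal (∑' j, |c j|) := by
        rw [ENNReal.tsum_mul_right, ENNReal.ofReal_tsum_of_nonneg (fun _ => abs_nonneg _) hc,
          mul_comm]

end UpNorm

end DP

/-- (Almost orthogonality in `U^p`.) Let `1 ≤ p ≤ 2` and let `T k` be bounded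
linear operators on `L²(ℝⁿ)` with `(∑ k ‖T k f‖²)^{1/2} ≤ M₂ ‖f‖` for all `f`. Then for every
`u ∈ U^p`, applying `T k` pointwise in time, `(∑ k ‖T k u‖_{U^p}²)^{1/2} ≤ M₂ ‖u‖_{U^p}`. -/
theorem stmt2 (n : ℕ) (p : ℝ) (hp1 : 1 ≤ p) (hp2 : p ≤ 2)
    (T : ℕ → Hsp n →L[ℂ] Hsp n) (M2 : ℝ≥0∞)
    (hT : ∀ f : Hsp n, (∑' k, (‖T k f‖₊ : ℝ≥0∞) ^ (2 : ℝ)) ^ ((1 : ℝ) / 2) ≤ M2 * (‖f‖₊ : ℝ≥0∞))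
    (u : ℝ → Hsp n) :
    (∑' k, DP.UpNorm p (fun s => T k (u s)) ^ (2 : ℝ)) ^ ((1 : ℝ) / 2) ≤ M2 * DP.UpNorm p u := by
  have hp : 0 < p := by linarith
  have of_upNorm_eq_zero : (∀ k, DP.UpNorm p (fun s => T k (u s)) = 0) →
      (∑' k, DP.UpNorm p (fun s => T k (u s)) ^ (2 : ℝ)) ^ ((1 : ℝ) / 2) ≤ M2 * DP.UpNorm p u :=
    fun h => by simp [h]
  rcases eq_or_ne M2 0 with rfl | hM₀
  · refine of_upNorm_eq_zero fun k => le_antisymm ?_ zero_le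
    have hTk : T k = 0 := by
      ext1 f
      obtain h | ⟨-, h⟩ := by simpa using hT f
      exacts [h k, absurd h (by norm_num)]
    simpa [hTk] using DP.upNorm_map_le hp (T k) u
  rcases eq_or_ne M2 ⊤ with rfl | hM
  · rcases eq_or_ne (DP.UpNorm p u) 0 with hu | hu
    · exact of_upNorm_eq_zero fun k =>
        le_antisymm (by simpa [hu] using DP.upNorm_map_le hp (T k) u) zero_le
    · simp [top_mul hu]
  exact DP.le_mul_upNorm hM₀ hM fun c a ha hc hu =>
    DP.tsum_upNorm_map_sq_le_of_hasSum hp hp2 T M2 hT ha hc hu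
end
end

section
/- Let $d, \lambda_0, \lambda_1, \lambda_2 \in 2^{\mathbb{Z}}$ and suppose $(\tau, \xi), (\tau', \eta) \in \mathbb{R}^{1+n}$ satisfy $|\xi| \approx \lambda_1$, $|\eta| \approx \lambda_2$, $|\xi + \eta| \approx \lambda_0$, $||\tau| - |\xi|| \ll d$, $||\tau'| - |\eta|| \ll d$, and $||\tau + \tau'| - |\xi + \eta|| \approx d$. If $d \lesssim \min\{\lambda_0, \lambda_1, \lambda_2\}$, then the angle satisfies $\angle(\mathrm{sgn}(\tau)\xi, \mathrm{sgn}(\tau')\eta) \approx (d \lambda_0 / (\lambda_1 \lambda_2))^{1/2}$. -/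
set_option maxHeartbeats 1000000


open InnerProductGeometry

open scoped RealInnerProductSpace

private lemma aux_abs_sq {E : Type*} [NormedAddCommGroup E] [InnerProductSpace ℝ E]
    (a b : ℝ) (ha : a = 1 ∨ a = -1) (hb : b = 1 ∨ b = -1) (ξ η : E) :
    |(a * ‖ξ‖ + b * ‖η‖) ^ 2 - ‖ξ + η‖ ^ 2| = 2 * (‖ξ‖ * ‖η‖ - ⟪a • ξ, b • η⟫) := by
  have hY := norm_add_sq_real ξ η
  have hP := abs_real_inner_le_norm ξ η
  have hP1 := abs_le.1 hP
  rcases ha with rfl | rfl <;> rcases hb with rfl | rfl <;>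
    simp only [one_smul, neg_one_smul, inner_neg_left, inner_neg_right, real_inner_comm,
      neg_neg] <;>
    [rw [abs_of_nonneg (by linarith only [hY, hP1.1, hP1.2])];
     rw [abs_of_nonpos (by linarith only [hY, hP1.1, hP1.2])];
     rw [abs_of_nonpos (by linarith only [hY, hP1.1, hP1.2])];
     rw [abs_of_nonneg (by linarith only [hY, hP1.1, hP1.2])]] <;>
    linarith only [hY, hP1.1, hP1.2]

/-- (Resonance bound, small modulation case.) There is a constant `C ≥ 1`
(depending only on the dimension) such that for all dyadic `d, λ₀, λ₁, λ₂` and all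
`(τ, ξ), (τ', η)` with `|ξ| ≈ λ₁`, `|η| ≈ λ₂`, `|ξ+η| ≈ λ₀`, `||τ|-|ξ|| ≪ d`,
`||τ'|-|η|| ≪ d`, `||τ+τ'|-|ξ+η|| ≈ d`, and `d ≲ min{λ₀,λ₁,λ₂}`, one has
`∠(sgn(τ)ξ, sgn(τ')η) ≈ (d λ₀/(λ₁λ₂))^{1/2}`. -/
theorem stmt9 (n : ℕ) (hn : 2 ≤ n) :
    ∃ C : ℝ, 1 ≤ C ∧ ∀ (d lam0 lam1 lam2 : ℝ),
      (∃ k : ℤ, d = (2 : ℝ) ^ k) → (∃ k : ℤ, lam0 = (2 : ℝ) ^ k) →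
      (∃ k : ℤ, lam1 = (2 : ℝ) ^ k) → (∃ k : ℤ, lam2 = (2 : ℝ) ^ k) →
      ∀ (τ τ' : ℝ) (ξ η : EuclideanSpace ℝ (Fin n)),
      lam1 / 2 ≤ ‖ξ‖ → ‖ξ‖ ≤ 2 * lam1 →
      lam2 / 2 ≤ ‖η‖ → ‖η‖ ≤ 2 * lam2 →
      lam0 / 2 ≤ ‖ξ + η‖ → ‖ξ + η‖ ≤ 2 * lam0 →
      |(|τ| - ‖ξ‖)| ≤ d / C ^ 2 → |(|τ'| - ‖η‖)| ≤ d / C ^ 2 →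
      d / 2 ≤ |(|τ + τ'| - ‖ξ + η‖)| → |(|τ + τ'| - ‖ξ + η‖)| ≤ 2 * d →
      d ≤ C * min lam0 (min lam1 lam2) →
      Real.sqrt (d * lam0 / (lam1 * lam2)) / C ≤ angle (Real.sign τ • ξ) (Real.sign τ' • η) ∧
        angle (Real.sign τ • ξ) (Real.sign τ' • η) ≤ C * Real.sqrt (d * lam0 / (lam1 * lam2)) := by
  refine ⟨200, by norm_num, ?_⟩
  rintro d lam0 lam1 lam2 ⟨kd, rfl⟩ ⟨k0, rfl⟩ ⟨k1, rfl⟩ ⟨k2, rfl⟩ τ τ' ξ η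
    h1 h2 h3 h4 h5 h6 hmτ hmτ' hm1 hm2 hdmin
  set d := (2 : ℝ) ^ kd with hd_def
  set lam0 := (2 : ℝ) ^ k0 with hl0_def
  set lam1 := (2 : ℝ) ^ k1 with hl1_def
  set lam2 := (2 : ℝ) ^ k2 with hl2_def
  have hd0 : 0 < d := by positivity
  have hl0 : 0 < lam0 := by positivity
  have hl1 : 0 < lam1 := by positivity
  have hl2 : 0 < lam2 := by positivity
  -- consequences of `d ≤ 200 * min`
  have hmin0 : min lam0 (min lam1 lam2) ≤ lam0 := min_le_left _ _
  have hmin1 : min lam0 (min lam1 lam2) ≤ lam1 :=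
    le_trans (min_le_right _ _) (min_le_left _ _)
  have hmin2 : min lam0 (min lam1 lam2) ≤ lam2 :=
    le_trans (min_le_right _ _) (min_le_right _ _)
  have hdl0 : d ≤ 200 * lam0 := by linarith only [hdmin, hmin0, hl0]
  have hdl1 : d ≤ 200 * lam1 := by linarith only [hdmin, hmin1, hl1]
  have hdl2 : d ≤ 200 * lam2 := by linarith only [hdmin, hmin2, hl2]
  -- positivity of norms, nonvanishing of τ, τ'
  have hnξ : 0 < ‖ξ‖ := by linarith only [h1, hl1]
  have hnη : 0 < ‖η‖ := by linarith only [h3, hl2]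
  have hmτ1 := abs_le.1 hmτ
  have hmτ'1 := abs_le.1 hmτ'
  have hC2 : (200 : ℝ) ^ 2 = 40000 := by norm_num
  rw [hC2] at hmτ1 hmτ'1
  rw [hC2] at hmτ hmτ'
  have hτpos : 0 < |τ| := by
    have : ‖ξ‖ - |τ| ≤ d / 40000 := by linarith only [hmτ1.1]
    linarith only [this, h1, hdl1, hl1]
  have hτ'pos : 0 < |τ'| := by
    have : ‖η‖ - |τ'| ≤ d / 40000 := by linarith only [hmτ'1.1]
    linarith only [this, h3, hdl2, hl2]
  have hτne : τ ≠ 0 := fun h => by simp [h] at hτpos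
  have hτ'ne : τ' ≠ 0 := fun h => by simp [h] at hτ'pos
  set a := Real.sign τ with ha_def
  set b := Real.sign τ' with hb_def
  have ha : a = 1 ∨ a = -1 := by
    rcases hτne.lt_or_gt with h | h
    · exact Or.inr (Real.sign_of_neg h)
    · exact Or.inl (Real.sign_of_pos h)
  have hb : b = 1 ∨ b = -1 := by
    rcases hτ'ne.lt_or_gt with h | h
    · exact Or.inr (Real.sign_of_neg h)
    · exact Or.inl (Real.sign_of_pos h)
  have habs : |a| = 1 := by rcases ha with h | h <;> simp [h]
  have hbabs : |b| = 1 := by rcases hb with h | h <;> simp [h]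
  have hτa : a * |τ| = τ := by
    rcases hτne.lt_or_gt with h | h
    · rw [ha_def, Real.sign_of_neg h, abs_of_neg h]; ring
    · rw [ha_def, Real.sign_of_pos h, abs_of_pos h]; ring
  have hτ'b : b * |τ'| = τ' := by
    rcases hτ'ne.lt_or_gt with h | h
    · rw [hb_def, Real.sign_of_neg h, abs_of_neg h]; ring
    · rw [hb_def, Real.sign_of_pos h, abs_of_pos h]; ring
  set X := |a * ‖ξ‖ + b * ‖η‖| with hX_def
  set Y := ‖ξ + η‖ with hY_def
  have hY0 : 0 ≤ Y := norm_nonneg _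
  have hX0 : 0 ≤ X := abs_nonneg _
  -- Step A : |τ+τ'| is close to X
  have hA : |τ + τ' - (a * ‖ξ‖ + b * ‖η‖)| ≤ d / 20000 := by
    have he : τ + τ' - (a * ‖ξ‖ + b * ‖η‖) = a * (|τ| - ‖ξ‖) + b * (|τ'| - ‖η‖) := by
      linear_combination -hτa - hτ'b
    rw [he]
    calc |a * (|τ| - ‖ξ‖) + b * (|τ'| - ‖η‖)|
        ≤ |a * (|τ| - ‖ξ‖)| + |b * (|τ'| - ‖η‖)| := abs_add_le _ _
      _ = |(|τ| - ‖ξ‖)| + |(|τ'| - ‖η‖)| := by rw [abs_mul, abs_mul, habs, hbabs, one_mul, one_mul]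
      _ ≤ d / 40000 + d / 40000 := add_le_add hmτ hmτ'
      _ = d / 20000 := by ring
  have hTX : |(|τ + τ'|) - X| ≤ d / 20000 :=
    le_trans (abs_abs_sub_abs_le_abs_sub _ _) hA
  -- Step B : d/4 ≤ |X - Y| ≤ 3 d
  have htri : |(|τ + τ'|) - Y| ≤ |(|τ + τ'|) - X| + |X - Y| := by
    calc |(|τ + τ'|) - Y| = |((|τ + τ'|) - X) + (X - Y)| := by ring_nf
      _ ≤ _ := abs_add_le _ _
  have htri2 : |X - Y| ≤ |(|τ + τ'|) - X| + |(|τ + τ'|) - Y| := by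
    calc |X - Y| = |-(((|τ + τ'|) - X)) + ((|τ + τ'|) - Y)| := by ring_nf
      _ ≤ |(-(((|τ + τ'|)) - X))| + |(|τ + τ'|) - Y| := abs_add_le _ _
      _ = _ := by rw [abs_neg]
  have hXY1 : d / 4 ≤ |X - Y| := by linarith only [htri, hTX, hm1, hd0]
  have hXY2 : |X - Y| ≤ 3 * d := by linarith only [htri2, hTX, hm2, hd0]
  have hXle : X ≤ Y + 3 * d := by
    have := le_abs_self (X - Y)
    linarith only [this, hXY2]
  -- the angle
  set t := angle (a • ξ) (b • η) with ht_def
  have ht0 : 0 ≤ t := angle_nonneg _ _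
  have htpi : t ≤ Real.pi := angle_le_pi _ _
  have hnu : ‖a • ξ‖ = ‖ξ‖ := by rw [norm_smul, Real.norm_eq_abs, habs, one_mul]
  have hnv : ‖b • η‖ = ‖η‖ := by rw [norm_smul, Real.norm_eq_abs, hbabs, one_mul]
  have hinner : ⟪a • ξ, b • η⟫ = Real.cos t * (‖ξ‖ * ‖η‖) := by
    have hc := cos_angle (a • ξ) (b • η)
    rw [hnu, hnv] at hc
    rw [← ht_def] at hc
    rw [hc]
    field_simp
  -- key identity
  have hkey : |X - Y| * (X + Y) = 2 * (‖ξ‖ * ‖η‖) - 2 * Real.cos t * (‖ξ‖ * ‖η‖) := by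
    have h0 : |X - Y| * (X + Y) = |X ^ 2 - Y ^ 2| := by
      rw [show X + Y = |X + Y| from (abs_of_nonneg (add_nonneg hX0 hY0)).symm, ← abs_mul]
      congr 1; ring
    have hXsq : X ^ 2 = (a * ‖ξ‖ + b * ‖η‖) ^ 2 := sq_abs _
    rw [h0, hXsq, aux_abs_sq a b ha hb ξ η, hinner]
    ring
  -- bounds on 2‖ξ‖‖η‖(1-cos t)
  have hcos1 : Real.cos t ≤ 1 := Real.cos_le_one t
  have hlow : d * lam0 / 8 ≤ 2 * (‖ξ‖ * ‖η‖) - 2 * Real.cos t * (‖ξ‖ * ‖η‖) := by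
    rw [← hkey]
    have : d / 4 * (lam0 / 2) ≤ |X - Y| * (X + Y) := by
      apply mul_le_mul hXY1 (by linarith only [h5, hX0]) (by linarith only [hl0]) (abs_nonneg _)
    linarith only [this]
  have hup : 2 * (‖ξ‖ * ‖η‖) - 2 * Real.cos t * (‖ξ‖ * ‖η‖) ≤ 1812 * (d * lam0) := by
    rw [← hkey]
    have h604 : X + Y ≤ 604 * lam0 := by linarith only [hXle, h6, hdl0]
    calc |X - Y| * (X + Y) ≤ 3 * d * (604 * lam0) := by
          apply mul_le_mul hXY2 h604 (by linarith only [hX0, hY0]) (by positivity)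
      _ = 1812 * (d * lam0) := by ring
  -- translate to bounds on (1 - cos t) * lam1 * lam2
  have hN1 : lam1 * lam2 / 4 ≤ ‖ξ‖ * ‖η‖ := by
    have := mul_le_mul h1 h3 (by positivity) (norm_nonneg ξ)
    linarith only [this]
  have hN2 : ‖ξ‖ * ‖η‖ ≤ 4 * (lam1 * lam2) := by
    have := mul_le_mul h2 h4 (norm_nonneg η) (by positivity)
    linarith only [this]
  have hql : d * lam0 ≤ 64 * (lam1 * lam2) * (1 - Real.cos t) := by
    linarith only [mul_nonneg (sub_nonneg.2 hN2) (sub_nonneg.2 hcos1), hlow]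
  have hqu : lam1 * lam2 * (1 - Real.cos t) ≤ 3624 * (d * lam0) := by
    linarith only [mul_nonneg (sub_nonneg.2 hN1) (sub_nonneg.2 hcos1), hup]
  -- cosine comparison with t^2
  have hcosA : 1 - Real.cos t ≤ t ^ 2 / 2 := by
    have := Real.one_sub_sq_div_two_le_cos (x := t)
    linarith only [this]
  have hcosB : t ^ 2 ≤ 8 * (1 - Real.cos t) := by
    have hj := Real.cos_le_one_sub_mul_cos_sq (x := t) (by rw [abs_of_nonneg ht0]; exact htpi)
    have hpi4 : Real.pi ≤ 4 := by linarith only [Real.pi_le_four]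
    have hpi0 : 0 < Real.pi := Real.pi_pos
    have h2 : 2 / Real.pi ^ 2 * t ^ 2 ≤ 1 - Real.cos t := by linarith only [hj]
    have h3 : t ^ 2 / 8 ≤ 2 / Real.pi ^ 2 * t ^ 2 := by
      have hp2 : Real.pi ^ 2 ≤ 16 := by
        have h4 := Real.pi_le_four
        have h0 := Real.pi_pos
        nlinarith only [h4, h0]
      have : (1 : ℝ) / 8 ≤ 2 / Real.pi ^ 2 := by
        rw [div_le_div_iff₀ (by norm_num) (by positivity)]
        linarith only [hp2]
      linarith only [mul_nonneg (sub_nonneg.2 this) (sq_nonneg t)]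
    linarith only [h2, h3]
  have hq0 : (0 : ℝ) ≤ d * lam0 / (lam1 * lam2) := by positivity
  have hl12 : (0 : ℝ) < lam1 * lam2 := by positivity
  constructor
  · -- lower bound
    apply le_of_pow_le_pow_left₀ two_ne_zero ht0
    rw [div_pow, Real.sq_sqrt hq0]
    have hq32 : d * lam0 ≤ 32 * t ^ 2 * (lam1 * lam2) := by
      linarith only [mul_nonneg (sub_nonneg.2 hcosA) hl12.le, hql]
    rw [hC2, div_div, div_le_iff₀ (by positivity : (0:ℝ) < lam1 * lam2 * 40000)]
    linarith only [hq32, mul_nonneg (sq_nonneg t) hl12.le]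
  · -- upper bound
    apply le_of_pow_le_pow_left₀ two_ne_zero (by positivity)
    rw [mul_pow, Real.sq_sqrt hq0, hC2]
    have h1c : t ^ 2 * (lam1 * lam2) ≤ 28992 * (d * lam0) := by
      linarith only [mul_nonneg (sub_nonneg.2 hcosB) hl12.le, hqu]
    rw [← mul_div_assoc, le_div_iff₀ hl12]
    linarith only [h1c, (mul_pos hd0 hl0).le]
end

section
/- Let $d, \lambda_0, \lambda_1, \lambda_2 \in 2^{\mathbb{Z}}$ and suppose $(\tau, \xi), (\tau', \eta) \in \mathbb{R}^{1+n}$ satisfy $|\xi| \approx \lambda_1$, $|\eta| \approx \lambda_2$, $|\xi + \eta| \approx \lambda_0$, $||\tau| - |\xi|| \ll d$, $||\tau'| - |\eta|| \ll d$, and $||\tau + \tau'| - |\xi + \eta|| \approx d$. If $d \gg \min\{\lambda_0, \lambda_1, \lambda_2\}$, then necessarily $\mathrm{sgn}(\tau) = \mathrm{sgn}(\tau')$, $\angle(\xi, \eta) \approx 1$, $d \approx \max\{\lambda_0, \lambda_1, \lambda_2\}$, and $\lambda_0 \ll \lambda_1 \approx \lambda_2$. -/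
open InnerProductGeometry

/-!
If `τ` and `τ'` had opposite signs (or one vanished), then `|τ + τ'| = ||τ| - |τ'||` would be
close to `||ξ| - |η||`, which differs from `|ξ + η|` by at most twice the smallest of the three
frequencies; the output modulation `d` could then not dominate `min {λ₀, λ₁, λ₂}`. So the signs
agree, and the output modulation is, up to the small input modulations, the resonance
`|ξ| + |η| - |ξ + η| ≤ 2 min {|ξ|, |η|}`. Hence `d ≲ min {λ₁, λ₂}`, which forces the minimum in
`d ≫ min {λ₀, λ₁, λ₂}` to be `λ₀`. Then `|ξ + η|` is small compared with `|ξ|` and `|η|`, so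
`|ξ| ≈ |η|`, the resonance is comparable to `max {|ξ|, |η|}`, and `ξ`, `η` form an obtuse angle.
-/

lemma abs_add_eq_abs_abs_sub_abs_of_mul_nonpos {α : Type*} [Ring α] [LinearOrder α]
    [IsStrictOrderedRing α] {a b : α} (h : a * b ≤ 0) : |a + b| = |(|a| - |b|)| := by
  rcases mul_nonpos_iff.mp h with ⟨ha, hb⟩ | ⟨ha, hb⟩
  · rw [abs_of_nonneg ha, abs_of_nonpos hb, sub_neg_eq_add]
  · rw [abs_of_nonpos ha, abs_of_nonneg hb, ← neg_add', abs_neg]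

lemma Real.sign_eq_sign_of_mul_pos {a b : ℝ} (h : 0 < a * b) : Real.sign a = Real.sign b := by
  rcases mul_pos_iff.mp h with ⟨ha, hb⟩ | ⟨ha, hb⟩
  · rw [Real.sign_of_pos ha, Real.sign_of_pos hb]
  · rw [Real.sign_of_neg ha, Real.sign_of_neg hb]

section Modulation

variable {E : Type*} [SeminormedAddCommGroup E]

lemma abs_norm_sub_norm_le_norm_add (ξ η : E) : |‖ξ‖ - ‖η‖| ≤ ‖ξ + η‖ := by
  simpa using abs_norm_sub_norm_le ξ (-η)

lemma abs_abs_add_sub_norm_add_le_of_mul_nonpos {τ τ' : ℝ} (h : τ * τ' ≤ 0) (ξ η : E) :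
    |(|τ + τ'| - ‖ξ + η‖)| ≤
      |(|τ| - ‖ξ‖)| + |(|τ'| - ‖η‖)| + 2 * min ‖ξ + η‖ (min ‖ξ‖ ‖η‖) := by
  rw [abs_add_eq_abs_abs_sub_abs_of_mul_nonpos h]
  have hsub : |(|τ| - |τ'|) - (‖ξ‖ - ‖η‖)| ≤ |(|τ| - ‖ξ‖)| + |(|τ'| - ‖η‖)| := by
    rw [show (|τ| - |τ'|) - (‖ξ‖ - ‖η‖) = (|τ| - ‖ξ‖) - (|τ'| - ‖η‖) by ring]
    exact abs_sub _ _
  have hres : ‖ξ + η‖ - |‖ξ‖ - ‖η‖| ≤ 2 * min ‖ξ + η‖ (min ‖ξ‖ ‖η‖) := by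
    rw [mul_min_of_nonneg _ _ zero_le_two, mul_min_of_nonneg _ _ zero_le_two]
    have := norm_add_le ξ η
    refine le_min (by linarith [abs_nonneg (‖ξ‖ - ‖η‖), norm_nonneg (ξ + η)]) (le_min ?_ ?_) <;>
      cases abs_cases (‖ξ‖ - ‖η‖) <;> linarith
  have hclose := abs_le.mp ((abs_abs_sub_abs_le_abs_sub _ _).trans hsub)
  have := abs_norm_sub_norm_le_norm_add ξ η
  exact abs_le.mpr ⟨by linarith, by linarith⟩

lemma abs_add_sub_norm_add_of_mul_nonneg {τ τ' : ℝ} (h : 0 ≤ τ * τ') (ξ η : E) :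
    |τ + τ'| - ‖ξ + η‖ = (|τ| - ‖ξ‖) + (|τ'| - ‖η‖) + (‖ξ‖ + ‖η‖ - ‖ξ + η‖) := by
  rw [(abs_add_eq_add_abs_iff τ τ').mpr (mul_nonneg_iff.mp h)]
  ring

end Modulation

lemma InnerProductGeometry.pi_div_two_le_angle_of_norm_add_le {V : Type*}
    [NormedAddCommGroup V] [InnerProductSpace ℝ V] {x y : V}
    (hx : ‖x + y‖ ≤ ‖x‖) (hy : ‖x + y‖ ≤ ‖y‖) : Real.pi / 2 ≤ angle x y := by
  have hinner : inner ℝ x y ≤ 0 := by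
    -- `2 ⟪x, y⟫ = ‖x + y‖² - ‖x‖² - ‖y‖² ≤ ‖x‖ ‖y‖ - ‖x‖² - ‖y‖² ≤ 0`
    have hsq := norm_add_sq_real x y
    nlinarith [mul_le_mul hx hy (norm_nonneg _) (norm_nonneg _), sq_nonneg (‖x‖ - ‖y‖),
      norm_nonneg x, norm_nonneg y]
  exact not_lt.mp fun h ↦ (Real.arccos_lt_pi_div_two.mp h).not_ge
    (div_nonpos_of_nonpos_of_nonneg hinner (by positivity))

theorem stmt10_general (n : ℕ) :
    ∃ C : ℝ, 1 ≤ C ∧ ∀ (d lam0 lam1 lam2 : ℝ),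
      (∃ k : ℤ, d = (2 : ℝ) ^ k) → (∃ k : ℤ, lam0 = (2 : ℝ) ^ k) →
      (∃ k : ℤ, lam1 = (2 : ℝ) ^ k) → (∃ k : ℤ, lam2 = (2 : ℝ) ^ k) →
      ∀ (τ τ' : ℝ) (ξ η : EuclideanSpace ℝ (Fin n)),
      lam1 / 2 ≤ ‖ξ‖ → ‖ξ‖ ≤ 2 * lam1 →
      lam2 / 2 ≤ ‖η‖ → ‖η‖ ≤ 2 * lam2 →
      lam0 / 2 ≤ ‖ξ + η‖ → ‖ξ + η‖ ≤ 2 * lam0 →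
      |(|τ| - ‖ξ‖)| ≤ d / C ^ 2 → |(|τ'| - ‖η‖)| ≤ d / C ^ 2 →
      d / 2 ≤ |(|τ + τ'| - ‖ξ + η‖)| → |(|τ + τ'| - ‖ξ + η‖)| ≤ 2 * d →
      C * min lam0 (min lam1 lam2) ≤ d →
      Real.sign τ = Real.sign τ' ∧
        1 / C ≤ angle ξ η ∧ angle ξ η ≤ C ∧
        max lam0 (max lam1 lam2) / C ≤ d ∧ d ≤ C * max lam0 (max lam1 lam2) ∧
        2 * lam0 ≤ lam1 ∧ lam1 / C ≤ lam2 ∧ lam2 ≤ C * lam1 := by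
  refine ⟨100, by norm_num, ?_⟩
  intro d l0 l1 l2 ⟨k, hk⟩ _ _ _ τ τ' ξ η ha₁ ha₂ hb₁ hb₂ _ hc₂ hτ hτ' hlow hhigh hmin
  have hd : 0 < d := hk ▸ zpow_pos two_pos k
  have htri := norm_add_le ξ η
  have htri' := abs_le.mp (abs_norm_sub_norm_le_norm_add ξ η)
  have hττ' : 0 < τ * τ' := by
    by_contra! hopp
    have hmod := abs_abs_add_sub_norm_add_le_of_mul_nonpos hopp ξ η
    have hfreq : min ‖ξ + η‖ (min ‖ξ‖ ‖η‖) ≤ 2 * min l0 (min l1 l2) := by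
      rw [mul_min_of_nonneg _ _ zero_le_two, mul_min_of_nonneg _ _ zero_le_two]
      exact min_le_min hc₂ (min_le_min ha₂ hb₂)
    linarith
  have hres : d / 3 ≤ ‖ξ‖ + ‖η‖ - ‖ξ + η‖ ∧ ‖ξ‖ + ‖η‖ - ‖ξ + η‖ ≤ 3 * d := by
    rw [abs_add_sub_norm_add_of_mul_nonneg hττ'.le] at hlow hhigh
    have := abs_le.mp hτ
    have := abs_le.mp hτ'
    constructor <;> cases abs_cases ((|τ| - ‖ξ‖) + (|τ'| - ‖η‖) + (‖ξ‖ + ‖η‖ - ‖ξ + η‖)) <;>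
      linarith
  have hl0 : 100 * l0 ≤ d := by
    rw [mul_min_of_nonneg _ _ (by norm_num), mul_min_of_nonneg _ _ (by norm_num)] at hmin
    simp only [min_le_iff] at hmin
    -- `hres` gives `d ≤ 12 λ₁` and `d ≤ 12 λ₂`, so only the `λ₀` case survives
    rcases hmin with h | h | h <;> linarith
  have hangle := pi_div_two_le_angle_of_norm_add_le (x := ξ) (y := η) (by linarith) (by linarith)
  have hmax : l1 ≤ max l0 (max l1 l2) := le_max_of_le_right (le_max_left _ _)
  have hmax' : max l0 (max l1 l2) ≤ 6 * d :=
    max_le (by linarith) (max_le (by linarith) (by linarith))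
  refine ⟨Real.sign_eq_sign_of_mul_pos hττ', by linarith [Real.pi_gt_three],
    (angle_le_pi ξ η).trans (by linarith [Real.pi_le_four]),
    (div_le_iff₀ (by norm_num)).mpr (by linarith), by linarith, by linarith,
    (div_le_iff₀ (by norm_num)).mpr (by linarith), by linarith⟩

/-- (Resonance bound, high modulation case.) There is a constant `C ≥ 1`
such that for all dyadic `d, λ₀, λ₁, λ₂` and all `(τ, ξ), (τ', η)` with `|ξ| ≈ λ₁`,
`|η| ≈ λ₂`, `|ξ+η| ≈ λ₀`, `||τ|-|ξ|| ≪ d`, `||τ'|-|η|| ≪ d`, `||τ+τ'|-|ξ+η|| ≈ d`, and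
`d ≫ min{λ₀,λ₁,λ₂}`, one necessarily has `sgn τ = sgn τ'`, `∠(ξ,η) ≈ 1`,
`d ≈ max{λ₀,λ₁,λ₂}`, and `λ₀ ≪ λ₁ ≈ λ₂`. -/
theorem stmt10 (n : ℕ) (hn : 2 ≤ n) :
    ∃ C : ℝ, 1 ≤ C ∧ ∀ (d lam0 lam1 lam2 : ℝ),
      (∃ k : ℤ, d = (2 : ℝ) ^ k) → (∃ k : ℤ, lam0 = (2 : ℝ) ^ k) →
      (∃ k : ℤ, lam1 = (2 : ℝ) ^ k) → (∃ k : ℤ, lam2 = (2 : ℝ) ^ k) →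
      ∀ (τ τ' : ℝ) (ξ η : EuclideanSpace ℝ (Fin n)),
      lam1 / 2 ≤ ‖ξ‖ → ‖ξ‖ ≤ 2 * lam1 →
      lam2 / 2 ≤ ‖η‖ → ‖η‖ ≤ 2 * lam2 →
      lam0 / 2 ≤ ‖ξ + η‖ → ‖ξ + η‖ ≤ 2 * lam0 →
      |(|τ| - ‖ξ‖)| ≤ d / C ^ 2 → |(|τ'| - ‖η‖)| ≤ d / C ^ 2 →
      d / 2 ≤ |(|τ + τ'| - ‖ξ + η‖)| → |(|τ + τ'| - ‖ξ + η‖)| ≤ 2 * d →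
      C * min lam0 (min lam1 lam2) ≤ d →
      Real.sign τ = Real.sign τ' ∧
        1 / C ≤ angle ξ η ∧ angle ξ η ≤ C ∧
        max lam0 (max lam1 lam2) / C ≤ d ∧ d ≤ C * max lam0 (max lam1 lam2) ∧
        2 * lam0 ≤ lam1 ∧ lam1 / C ≤ lam2 ∧ lam2 ≤ C * lam1 :=
  stmt10_general n
end

section
/- Let $d, \lambda_0, \lambda_1, \lambda_2 \in 2^{\mathbb{Z}}$ and suppose $(\tau, \xi), (\tau', \eta) \in \mathbb{R}^{1+n}$ satisfy $|\xi| \approx \lambda_1$, $|\eta| \approx \lambda_2$, $|\xi+\eta| \approx \lambda_0$, and $||\tau| - |\xi|| \lesssim d$, $||\tau'| - |\eta|| \lesssim d$, $||\tau + \tau'| - |\xi+\eta|| \lesssim d$. Then the sum of angles $\angle(\mathrm{sgn}(\tau)\xi, \mathrm{sgn}(\tau')\eta) + \angle(\mathrm{sgn}(\tau)\xi, \mathrm{sgn}(\tau+\tau')(\xi+\eta)) + \angle(\mathrm{sgn}(\tau')\eta, \mathrm{sgn}(\tau+\tau')(\xi+\eta))$ is bounded by $C (d / \min\{\lambda_0,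 \lambda_1, \lambda_2\})^{1/2}$ for a dimensional constant $C$. -/
open InnerProductGeometry Real RealInnerProductSpace

variable {E : Type*} [NormedAddCommGroup E] [InnerProductSpace ℝ E]

/-- quadratic lower bound on angle via cosine. -/
lemma sq_angle_le_aux (x y : E) : 2 / π ^ 2 * angle x y ^ 2 ≤ 1 - Real.cos (angle x y) := by
  have h := Real.cos_le_one_sub_mul_cos_sq (x := angle x y)
    (by rw [abs_of_nonneg (angle_nonneg x y)]; exact angle_le_pi x y)
  linarith

/-- Key pair lemma. -/
lemma pair_lemma_aux (u v : E) (hu : u ≠ 0) (hv : v ≠ 0) (ε ε' m D : ℝ)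
    (hε : ε = 1 ∨ ε = -1) (hε' : ε' = 1 ∨ ε' = -1) (hm : |m| = ‖u + v‖)
    (h : |ε * ‖u‖ + ε' * ‖v‖ - m| ≤ D) :
    angle (ε • u) (ε' • v) ^ 2 ≤ π ^ 2 / 4 * (D * (‖u‖ + ‖v‖ + ‖u + v‖) / (‖u‖ * ‖v‖)) := by
  have hεsq : ε ^ 2 = 1 := by rcases hε with h1 | h1 <;> rw [h1] <;> norm_num
  have hε'sq : ε' ^ 2 = 1 := by rcases hε' with h1 | h1 <;> rw [h1] <;> norm_num
  have hεa : |ε| = 1 := by rcases hε with h1 | h1 <;> rw [h1] <;> norm_num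
  have hε'a : |ε'| = 1 := by rcases hε' with h1 | h1 <;> rw [h1] <;> norm_num
  have hun : 0 < ‖u‖ := norm_pos_iff.mpr hu
  have hvn : 0 < ‖v‖ := norm_pos_iff.mpr hv
  have hD : 0 ≤ D := le_trans (abs_nonneg _) h
  set θ := angle (ε • u) (ε' • v) with hθ
  have hcos : Real.cos θ * (‖u‖ * ‖v‖) = ε * ε' * ⟪u, v⟫ := by
    rw [hθ, cos_angle, norm_smul, norm_smul, real_inner_smul_left, real_inner_smul_right,
      Real.norm_eq_abs, Real.norm_eq_abs, hεa, hε'a]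
    field_simp
    try ring
  have hexp : ‖u + v‖ ^ 2 = ‖u‖ ^ 2 + 2 * ⟪u, v⟫ + ‖v‖ ^ 2 := norm_add_sq_real u v
  have hdiff : (ε * ‖u‖ + ε' * ‖v‖) ^ 2 - ‖u + v‖ ^ 2
      = 2 * (ε * ε') * (‖u‖ * ‖v‖) * (1 - Real.cos θ) := by
    have h1 : (ε * ε') * (Real.cos θ * (‖u‖ * ‖v‖)) = (ε * ε') ^ 2 * ⟪u, v⟫ := by
      rw [hcos]; ring
    have h2 : (ε * ε') ^ 2 = 1 := by rw [mul_pow, hεsq, hε'sq]; norm_num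
    rw [h2, one_mul] at h1
    nlinarith [hεsq, hε'sq]
  have hcosle : Real.cos θ ≤ 1 := Real.cos_le_one θ
  have habs : |(ε * ‖u‖ + ε' * ‖v‖) ^ 2 - ‖u + v‖ ^ 2|
      = 2 * (‖u‖ * ‖v‖) * (1 - Real.cos θ) := by
    rw [hdiff, abs_mul, abs_mul, abs_mul, abs_mul, hεa, hε'a,
      abs_of_nonneg (sub_nonneg.mpr hcosle), abs_of_nonneg (le_of_lt (mul_pos hun hvn))]
    norm_num
  have hAbound : |ε * ‖u‖ + ε' * ‖v‖| ≤ ‖u‖ + ‖v‖ := by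
    calc |ε * ‖u‖ + ε' * ‖v‖| ≤ |ε * ‖u‖| + |ε' * ‖v‖| := abs_add_le _ _
    _ = ‖u‖ + ‖v‖ := by
        rw [abs_mul, abs_mul, hεa, hε'a, one_mul, one_mul,
          abs_of_nonneg (norm_nonneg u), abs_of_nonneg (norm_nonneg v)]
  have hfac : |(ε * ‖u‖ + ε' * ‖v‖) ^ 2 - ‖u + v‖ ^ 2| ≤ D * (‖u‖ + ‖v‖ + ‖u + v‖) := by
    have hm2 : m ^ 2 = ‖u + v‖ ^ 2 := by rw [← sq_abs, hm]
    have heq : (ε * ‖u‖ + ε' * ‖v‖) ^ 2 - ‖u + v‖ ^ 2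
        = (ε * ‖u‖ + ε' * ‖v‖ - m) * (ε * ‖u‖ + ε' * ‖v‖ + m) := by
      rw [← hm2]; ring
    rw [heq, abs_mul]
    have h2 : |ε * ‖u‖ + ε' * ‖v‖ + m| ≤ ‖u‖ + ‖v‖ + ‖u + v‖ := by
      calc |ε * ‖u‖ + ε' * ‖v‖ + m| ≤ |ε * ‖u‖ + ε' * ‖v‖| + |m| := abs_add_le _ _
      _ ≤ ‖u‖ + ‖v‖ + ‖u + v‖ := by rw [hm]; linarith
    exact mul_le_mul h h2 (abs_nonneg _) hD
  have hkey : 2 * (‖u‖ * ‖v‖) * (1 - Real.cos θ) ≤ D * (‖u‖ + ‖v‖ + ‖u + v‖) := by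
    rw [← habs]; exact hfac
  have hquad : 2 / π ^ 2 * θ ^ 2 ≤ 1 - Real.cos θ := sq_angle_le_aux _ _
  have hπ : (0:ℝ) < π ^ 2 := Real.pi_pos.trans_le (by nlinarith [Real.pi_gt_three])
  have hab : 0 < ‖u‖ * ‖v‖ := mul_pos hun hvn
  have hchain : 2 * (‖u‖ * ‖v‖) * (2 / π ^ 2 * θ ^ 2) ≤ D * (‖u‖ + ‖v‖ + ‖u + v‖) :=
    le_trans (mul_le_mul_of_nonneg_left hquad (by positivity)) hkey
  have hfin := mul_le_mul_of_nonneg_left hchain (by positivity : (0:ℝ) ≤ π ^ 2 / 4)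
  have hc : π ^ 2 / 4 * (2 * (‖u‖ * ‖v‖) * (2 / π ^ 2 * θ ^ 2)) = θ ^ 2 * (‖u‖ * ‖v‖) := by
    field_simp
    ring
  rw [hc] at hfin
  rw [show π ^ 2 / 4 * (D * (‖u‖ + ‖v‖ + ‖u + v‖) / (‖u‖ * ‖v‖))
      = π ^ 2 / 4 * (D * (‖u‖ + ‖v‖ + ‖u + v‖)) / (‖u‖ * ‖v‖) from by ring]
  exact (le_div_iff₀ hab).mpr hfin


lemma pbound_aux (L l0 l1 l2 : ℝ) (hLpos : 0 < L) (h1 : 0 < l1) (h2 : 0 < l2)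
    (hL1 : L ≤ l1) (hL2 : L ≤ l2) (t0 : l0 ≤ 4 * (l1 + l2)) :
    L * (l0 + l1 + l2) ≤ 10 * (l1 * l2) := by
  nlinarith [mul_le_mul_of_nonneg_left t0 hLpos.le,
    mul_le_mul_of_nonneg_right hL1 h2.le, mul_le_mul_of_nonneg_right hL2 h1.le]

lemma key_aux (d L S T prod lxy : ℝ) (hd : 0 < d) (hL : 0 < L) (hS0 : 0 ≤ S)
    (hST : S ≤ 2 * T) (hp : 0 < prod) (hp4 : lxy / 4 ≤ prod) (hpl : L * T ≤ 10 * lxy) :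
    3 * d * S / prod ≤ 240 * (d / L) := by
  rw [show (240:ℝ) * (d / L) = 240 * d / L from by ring, div_le_div_iff₀ hp hL]
  nlinarith [mul_le_mul_of_nonneg_right (mul_le_mul_of_nonneg_left hST (by linarith : (0:ℝ) ≤ 3 * d)) hL.le,
    mul_le_mul_of_nonneg_left hpl (by linarith : (0:ℝ) ≤ 6 * d),
    mul_le_mul_of_nonneg_left hp4 (by linarith : (0:ℝ) ≤ 240 * d)]

open Real in
lemma sqrtb_aux (x θ : ℝ) (hx : 0 ≤ x) (hθ0 : 0 ≤ θ)
    (h : θ ^ 2 ≤ π ^ 2 / 4 * (240 * x)) : θ ≤ 40 * Real.sqrt x := by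
  have h40 : (0:ℝ) ≤ 40 * Real.sqrt x := by positivity
  have hπ4 : π ≤ 4 := by linarith [Real.pi_le_four]
  have hπ0 : 0 < π := Real.pi_pos
  have hsq : θ ^ 2 ≤ (40 * Real.sqrt x) ^ 2 := by
    have hss := Real.sq_sqrt hx
    have hπ2 : π ^ 2 ≤ 16 := by nlinarith
    nlinarith [mul_le_mul_of_nonneg_right hπ2 hx]
  calc θ = Real.sqrt (θ ^ 2) := (Real.sqrt_sq hθ0).symm
  _ ≤ Real.sqrt ((40 * Real.sqrt x) ^ 2) := Real.sqrt_le_sqrt hsq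
  _ = 40 * Real.sqrt x := Real.sqrt_sq h40

/-- (Lower bound on resonance.) There is a dimensional constant `C` such that
for all dyadic `d, λ₀, λ₁, λ₂` and all `(τ, ξ), (τ', η)` with `|ξ| ≈ λ₁`, `|η| ≈ λ₂`,
`|ξ+η| ≈ λ₀`, and all three modulations `≲ d`, the sum of the three pairwise angles between
`sgn(τ)ξ`, `sgn(τ')η`, `sgn(τ+τ')(ξ+η)` is at most `C (d / min{λ₀,λ₁,λ₂})^{1/2}`. -/
theorem stmt11 (n : ℕ) (hn : 2 ≤ n) :
    ∃ C : ℝ, 1 ≤ C ∧ ∀ (d lam0 lam1 lam2 : ℝ),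
      (∃ k : ℤ, d = (2 : ℝ) ^ k) → (∃ k : ℤ, lam0 = (2 : ℝ) ^ k) →
      (∃ k : ℤ, lam1 = (2 : ℝ) ^ k) → (∃ k : ℤ, lam2 = (2 : ℝ) ^ k) →
      ∀ (τ τ' : ℝ) (ξ η : EuclideanSpace ℝ (Fin n)),
      lam1 / 2 ≤ ‖ξ‖ → ‖ξ‖ ≤ 2 * lam1 →
      lam2 / 2 ≤ ‖η‖ → ‖η‖ ≤ 2 * lam2 →
      lam0 / 2 ≤ ‖ξ + η‖ → ‖ξ + η‖ ≤ 2 * lam0 →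
      |(|τ| - ‖ξ‖)| ≤ d → |(|τ'| - ‖η‖)| ≤ d → |(|τ + τ'| - ‖ξ + η‖)| ≤ d →
      angle (Real.sign τ • ξ) (Real.sign τ' • η)
          + angle (Real.sign τ • ξ) (Real.sign (τ + τ') • (ξ + η))
          + angle (Real.sign τ' • η) (Real.sign (τ + τ') • (ξ + η))
        ≤ C * Real.sqrt (d / min lam0 (min lam1 lam2)) := by
  refine ⟨120, by norm_num, ?_⟩
  rintro d lam0 lam1 lam2 ⟨kd, hkd⟩ ⟨k0, hk0⟩ ⟨k1, hk1⟩ ⟨k2, hk2⟩ τ τ' ξ η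
    h1l h1u h2l h2u h0l h0u hm1 hm2 hm0
  have hd : (0:ℝ) < d := hkd ▸ by positivity
  have h0 : (0:ℝ) < lam0 := hk0 ▸ by positivity
  have h1 : (0:ℝ) < lam1 := hk1 ▸ by positivity
  have h2 : (0:ℝ) < lam2 := hk2 ▸ by positivity
  clear hkd hk0 hk1 hk2
  set L := min lam0 (min lam1 lam2) with hL
  clear_value L
  have hLpos : 0 < L := hL ▸ lt_min h0 (lt_min h1 h2)
  have hL0 : L ≤ lam0 := hL ▸ min_le_left _ _
  have hL1 : L ≤ lam1 := hL ▸ le_trans (min_le_right _ _) (min_le_left _ _)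
  have hL2 : L ≤ lam2 := hL ▸ le_trans (min_le_right _ _) (min_le_right _ _)
  have hπ4 : π ≤ 4 := by linarith [Real.pi_le_four]
  have hπ0 : 0 < π := Real.pi_pos
  -- degenerate case helper
  have hdeg : L ≤ 2 * d →
      angle (Real.sign τ • ξ) (Real.sign τ' • η)
          + angle (Real.sign τ • ξ) (Real.sign (τ + τ') • (ξ + η))
          + angle (Real.sign τ' • η) (Real.sign (τ + τ') • (ξ + η))
        ≤ 120 * Real.sqrt (d / L) := by
    intro hLd
    have h12 : (1:ℝ)/2 ≤ d / L := by
      rw [le_div_iff₀ hLpos]; linarith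
    have hs : (1:ℝ)/2 ≤ Real.sqrt (d / L) := by
      rw [show (1:ℝ)/2 = Real.sqrt ((1:ℝ)/4) by
        rw [show (1:ℝ)/4 = (1/2)^2 by norm_num, Real.sqrt_sq (by norm_num)]]
      exact Real.sqrt_le_sqrt (by linarith)
    have hb : angle (Real.sign τ • ξ) (Real.sign τ' • η)
          + angle (Real.sign τ • ξ) (Real.sign (τ + τ') • (ξ + η))
          + angle (Real.sign τ' • η) (Real.sign (τ + τ') • (ξ + η)) ≤ 3 * π := by
      linarith [angle_le_pi (Real.sign τ • ξ) (Real.sign τ' • η),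
        angle_le_pi (Real.sign τ • ξ) (Real.sign (τ + τ') • (ξ + η)),
        angle_le_pi (Real.sign τ' • η) (Real.sign (τ + τ') • (ξ + η))]
    calc _ ≤ 3 * π := hb
    _ ≤ 60 * (1/2 : ℝ) := by linarith
    _ ≤ 120 * Real.sqrt (d / L) := by linarith
  by_cases hτ : τ = 0
  · apply hdeg
    have : ‖ξ‖ ≤ d := by
      have := hm1; rw [hτ] at this; simpa using this
    linarith
  by_cases hτ' : τ' = 0
  · apply hdeg
    have : ‖η‖ ≤ d := by
      have := hm2; rw [hτ'] at this; simpa using this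
    linarith
  by_cases hττ' : τ + τ' = 0
  · apply hdeg
    have : ‖ξ + η‖ ≤ d := by
      have := hm0; rw [hττ'] at this; simpa using this
    linarith
  -- main case
  set s := Real.sign τ with hs
  set s' := Real.sign τ' with hs'
  set s'' := Real.sign (τ + τ') with hs''
  have sign_mul_abs : ∀ x : ℝ, x ≠ 0 → Real.sign x * |x| = x := by
    intro x hx
    rcases lt_trichotomy x 0 with h | h | h
    · rw [Real.sign_of_neg h, abs_of_neg h]; ring
    · exact absurd h hx
    · rw [Real.sign_of_pos h, abs_of_pos h]; ring
  have sign_pm : ∀ x : ℝ, x ≠ 0 → Real.sign x = 1 ∨ Real.sign x = -1 := by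
    intro x hx
    rcases Real.sign_apply_eq_of_ne_zero x hx with h | h
    · right; exact h
    · left; exact h
  have hsε : s = 1 ∨ s = -1 := sign_pm τ hτ
  have hs'ε : s' = 1 ∨ s' = -1 := sign_pm τ' hτ'
  have hs''ε : s'' = 1 ∨ s'' = -1 := sign_pm (τ + τ') hττ'
  have hsa : |s| = 1 := by rcases hsε with h | h <;> rw [h] <;> norm_num
  have hs'a : |s'| = 1 := by rcases hs'ε with h | h <;> rw [h] <;> norm_num
  have hs''a : |s''| = 1 := by rcases hs''ε with h | h <;> rw [h] <;> norm_num
  -- |s‖ξ‖ - τ| ≤ d etc.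
  have e1 : |s * ‖ξ‖ - τ| ≤ d := by
    have : s * ‖ξ‖ - τ = s * (‖ξ‖ - |τ|) := by
      rw [mul_sub]; rw [sign_mul_abs τ hτ]
    rw [this, abs_mul, hsa, one_mul, abs_sub_comm]; exact hm1
  have e2 : |s' * ‖η‖ - τ'| ≤ d := by
    have : s' * ‖η‖ - τ' = s' * (‖η‖ - |τ'|) := by
      rw [mul_sub]; rw [sign_mul_abs τ' hτ']
    rw [this, abs_mul, hs'a, one_mul, abs_sub_comm]; exact hm2
  have e0 : |s'' * ‖ξ + η‖ - (τ + τ')| ≤ d := by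
    have : s'' * ‖ξ + η‖ - (τ + τ') = s'' * (‖ξ + η‖ - |τ + τ'|) := by
      rw [mul_sub]; rw [sign_mul_abs (τ + τ') hττ']
    rw [this, abs_mul, hs''a, one_mul, abs_sub_comm]; exact hm0
  have ekey : |s * ‖ξ‖ + s' * ‖η‖ - s'' * ‖ξ + η‖| ≤ 3 * d := by
    have : s * ‖ξ‖ + s' * ‖η‖ - s'' * ‖ξ + η‖
        = (s * ‖ξ‖ - τ) + (s' * ‖η‖ - τ') - (s'' * ‖ξ + η‖ - (τ + τ')) := by ring
    rw [this]
    calc |(s * ‖ξ‖ - τ) + (s' * ‖η‖ - τ') - (s'' * ‖ξ + η‖ - (τ + τ'))|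
        ≤ |(s * ‖ξ‖ - τ) + (s' * ‖η‖ - τ')| + |s'' * ‖ξ + η‖ - (τ + τ')| := abs_sub _ _
      _ ≤ |s * ‖ξ‖ - τ| + |s' * ‖η‖ - τ'| + |s'' * ‖ξ + η‖ - (τ + τ')| := by
          linarith [abs_add_le (s * ‖ξ‖ - τ) (s' * ‖η‖ - τ')]
      _ ≤ 3 * d := by linarith
  have hξ0 : ξ ≠ 0 := by
    intro h; rw [h, norm_zero] at h1l; linarith
  have hη0 : η ≠ 0 := by
    intro h; rw [h, norm_zero] at h2l; linarith
  have hξη0 : ξ + η ≠ 0 := by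
    intro h; rw [h, norm_zero] at h0l; linarith
  set a := ‖ξ‖
  set b := ‖η‖
  set c := ‖ξ + η‖
  have hS : a + b + c ≤ 2 * (lam0 + lam1 + lam2) := by linarith
  -- triangle facts for lambdas
  have t0 : lam0 ≤ 4 * (lam1 + lam2) := by
    have := norm_add_le ξ η; linarith
  have t1 : lam1 ≤ 4 * (lam0 + lam2) := by
    have hh : ‖ξ‖ ≤ ‖ξ + η‖ + ‖η‖ := by
      have := norm_sub_le (ξ + η) η
      simpa using this
    linarith
  have t2 : lam2 ≤ 4 * (lam0 + lam1) := by
    have hh : ‖η‖ ≤ ‖ξ + η‖ + ‖ξ‖ := by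
      have := norm_sub_le (ξ + η) ξ
      simpa using this
    linarith
  -- per-pair product bounds: L * (lam0+lam1+lam2) ≤ 10 * lam_a * lam_b
  have p12 : L * (lam0 + lam1 + lam2) ≤ 10 * (lam1 * lam2) :=
    pbound_aux L lam0 lam1 lam2 hLpos h1 h2 hL1 hL2 t0
  have p10 : L * (lam0 + lam1 + lam2) ≤ 10 * (lam1 * lam0) := by
    have := pbound_aux L lam2 lam1 lam0 hLpos h1 h0 hL1 hL0 (by linarith : lam2 ≤ 4 * (lam1 + lam0))
    linarith
  have p20 : L * (lam0 + lam1 + lam2) ≤ 10 * (lam2 * lam0) := by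
    have := pbound_aux L lam1 lam2 lam0 hLpos h2 h0 hL2 hL0 (by linarith : lam1 ≤ 4 * (lam2 + lam0))
    linarith
  -- apply pair lemma three times
  have A1 := pair_lemma_aux ξ η hξ0 hη0 s s' (s'' * c) (3 * d) hsε hs'ε
    (by rw [abs_mul, hs''a, one_mul, abs_of_nonneg (norm_nonneg _)]) ekey
  have hneg : ξ + -(ξ + η) = -η := by abel
  have hneg' : η + -(ξ + η) = -ξ := by abel
  have A2 := pair_lemma_aux ξ (-(ξ + η)) hξ0 (neg_ne_zero.mpr hξη0) s (-s'') (-(s' * b)) (3 * d)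
    hsε (by rcases hs''ε with h | h <;> rw [h] <;> [right; left] <;> norm_num)
    (by rw [abs_neg, abs_mul, hs'a, one_mul, abs_of_nonneg (norm_nonneg _), hneg, norm_neg])
    (by rw [norm_neg]
        have : s * ‖ξ‖ + -s'' * c - -(s' * b) = s * a + s' * b - s'' * c := by ring
        rw [this]; exact ekey)
  have A3 := pair_lemma_aux η (-(ξ + η)) hη0 (neg_ne_zero.mpr hξη0) s' (-s'') (-(s * a)) (3 * d)
    hs'ε (by rcases hs''ε with h | h <;> rw [h] <;> [right; left] <;> norm_num)
    (by rw [abs_neg, abs_mul, hsa, one_mul, abs_of_nonneg (norm_nonneg _), hneg', norm_neg])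
    (by rw [norm_neg]
        have : s' * ‖η‖ + -s'' * c - -(s * a) = s * a + s' * b - s'' * c := by ring
        rw [this]; exact ekey)
  rw [hneg, norm_neg] at A2
  rw [hneg', norm_neg] at A3
  rw [norm_neg] at A2 A3
  have hA2ang : angle (s • ξ) (-s'' • -(ξ + η)) = angle (s • ξ) (s'' • (ξ + η)) := by
    congr 1; rw [neg_smul, smul_neg, neg_neg]
  have hA3ang : angle (s' • η) (-s'' • -(ξ + η)) = angle (s' • η) (s'' • (ξ + η)) := by
    congr 1; rw [neg_smul, smul_neg, neg_neg]
  rw [hA2ang] at A2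
  rw [hA3ang] at A3
  -- bound each S/prod term
  have hab : (0:ℝ) < a * b := mul_pos (by linarith) (by linarith)
  have hac : (0:ℝ) < a * c := mul_pos (by linarith) (by linarith)
  have hbc : (0:ℝ) < b * c := mul_pos (by linarith) (by linarith)
  have hd3 : (0:ℝ) ≤ 3 * d := by linarith
  have hsum : (0:ℝ) ≤ a + b + c := by positivity
  -- generic: if lam_x*lam_y/4 ≤ prod and L*(sum lam) ≤ 10 lam_x lam_y then
  -- 3d*(a+b+c)/prod ≤ 240 * d / L
  have key : ∀ prod lx ly : ℝ, 0 < prod → lx * ly / 4 ≤ prod →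
      L * (lam0 + lam1 + lam2) ≤ 10 * (lx * ly) →
      3 * d * (a + b + c) / prod ≤ 240 * (d / L) := fun prod lx ly hp hp4 hpl =>
    key_aux d L (a + b + c) (lam0 + lam1 + lam2) prod (lx * ly) hd hLpos hsum hS hp hp4 hpl
  have hq1 : lam1 * lam2 / 4 ≤ a * b := by
    have := mul_le_mul h1l h2l (by linarith) (norm_nonneg ξ)
    linarith
  have hq2 : lam1 * lam0 / 4 ≤ a * c := by
    have := mul_le_mul h1l h0l (by linarith) (norm_nonneg ξ)
    linarith
  have hq3 : lam2 * lam0 / 4 ≤ b * c := by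
    have := mul_le_mul h2l h0l (by linarith) (norm_nonneg η)
    linarith
  have B1 : angle (s • ξ) (s' • η) ^ 2 ≤ π ^ 2 / 4 * (240 * (d / L)) := by
    refine le_trans A1 ?_
    have := key (a * b) lam1 lam2 hab hq1 p12
    have hπ2 : (0:ℝ) ≤ π ^ 2 / 4 := by positivity
    exact mul_le_mul_of_nonneg_left this hπ2
  have B2 : angle (s • ξ) (s'' • (ξ + η)) ^ 2 ≤ π ^ 2 / 4 * (240 * (d / L)) := by
    refine le_trans A2 ?_
    have hre : 3 * d * (a + c + b) / (a * c) = 3 * d * (a + b + c) / (a * c) := by ring_nf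
    rw [hre]
    have := key (a * c) lam1 lam0 hac hq2 p10
    have hπ2 : (0:ℝ) ≤ π ^ 2 / 4 := by positivity
    exact mul_le_mul_of_nonneg_left this hπ2
  have B3 : angle (s' • η) (s'' • (ξ + η)) ^ 2 ≤ π ^ 2 / 4 * (240 * (d / L)) := by
    refine le_trans A3 ?_
    have hre : 3 * d * (b + c + a) / (b * c) = 3 * d * (a + b + c) / (b * c) := by ring_nf
    rw [hre]
    have := key (b * c) lam2 lam0 hbc hq3 p20
    have hπ2 : (0:ℝ) ≤ π ^ 2 / 4 := by positivity
    exact mul_le_mul_of_nonneg_left this hπ2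
  -- from squared bounds to bounds
  have hdL : (0:ℝ) ≤ d / L := by positivity
  have hsqb : ∀ θ : ℝ, 0 ≤ θ → θ ^ 2 ≤ π ^ 2 / 4 * (240 * (d / L)) →
      θ ≤ 40 * Real.sqrt (d / L) := fun θ hθ0 hθ => sqrtb_aux (d / L) θ hdL hθ0 hθ
  have C1 := hsqb _ (angle_nonneg _ _) B1
  have C2 := hsqb _ (angle_nonneg _ _) B2
  have C3 := hsqb _ (angle_nonneg _ _) B3
  linarith
end
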